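/- arXiv:2602.15719 — 3 statements merged into one kernel-verified Lean document; each statement's English description precedes it below -/
import Mathlib

section
/- Let T : [0,1) → [0,1) be a right-continuous interval exchange transformation and let Δ = [a,b) ⊆ [0,1) with a < b. Then for every x ∈ Δ the first return time h_{Δ,T}(x) = min{n ≥ 1 : T^n x ∈ Δ} is finite, i.e. there exists n ≥ 1 with T^n x ∈ Δ. -/
/-- A right-continuous interval exchange transformation of `[c, d)`:
there are `N ≥ 1` points `c = p 0 < p 1 < ⋯ < p N = d` and translation constants
`σ 0, …, σ (N-1)` such that `T x = x + σ i` on `[p i, p (i+1))`, and `T` is a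
bijection of `[c, d)` onto itself. -/
def IsIETOn (T : ℝ → ℝ) (c d : ℝ) : Prop :=
  ∃ (N : ℕ) (p : ℕ → ℝ) (σ : ℕ → ℝ),
    1 ≤ N ∧ p 0 = c ∧ p N = d ∧ (∀ i < N, p i < p (i + 1)) ∧
    (∀ i < N, ∀ x ∈ Set.Ico (p i) (p (i + 1)), T x = x + σ i) ∧
    Set.BijOn T (Set.Ico c d) (Set.Ico c d)

/-- A right-continuous IET of `[0, 1)`. -/
def IsIET (T : ℝ → ℝ) : Prop := IsIETOn T 0 1

open scoped ENNReal

open Classical in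
/-- Distance from `z` to the first partition point strictly to its right. -/
noncomputable def ietGap (p : ℕ → ℝ) (z : ℝ) : ℝ :=
  if h : ∃ i, z < p i then p (Nat.find h) - z else 1

open Classical in
lemma ietGap_key {N : ℕ} {p : ℕ → ℝ} (hN : 1 ≤ N) (hp0 : p 0 = 0) (hpN : p N = 1)
    {z : ℝ} (hz0 : 0 ≤ z) (hz1 : z < 1) :
    ∃ i, i < N ∧ p i ≤ z ∧ z + ietGap p z = p (i + 1) ∧ z < p (i + 1) := by
  have hex : ∃ i, z < p i := ⟨N, by rw [hpN]; exact hz1⟩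
  have hj : z < p (Nat.find hex) := Nat.find_spec hex
  have hjN : Nat.find hex ≤ N := Nat.find_min' hex (by rw [hpN]; exact hz1)
  have hj0 : Nat.find hex ≠ 0 := by
    intro h0
    rw [h0, hp0] at hj
    linarith
  obtain ⟨i, hi⟩ := Nat.exists_eq_succ_of_ne_zero hj0
  have hi' : Nat.find hex = i + 1 := hi
  have hiN : i < N := by omega
  have hple : p i ≤ z := by
    have := Nat.find_min hex (m := i) (by omega)
    exact not_lt.mp this
  refine ⟨i, hiN, hple, ?_, ?_⟩
  · rw [ietGap, dif_pos hex, hi']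
    ring
  · rw [← hi']; exact hj

/-- Width of the right-neighborhood of `x` controlled up to time `n`. -/
noncomputable def ietDelta (T : ℝ → ℝ) (p : ℕ → ℝ) (a b x : ℝ) : ℕ → ℝ
  | 0 => b - x
  | n + 1 => min (ietDelta T p a b x n)
      (min (ietGap p (T^[n] x))
        (if T^[n + 1] x < a then a - T^[n + 1] x else 1))

/-- The point "charged" when the width shrinks at step `n`. -/
noncomputable def ietCharge (T : ℝ → ℝ) (p : ℕ → ℝ) (a x : ℝ) (n : ℕ) : ℝ :=
  if ietGap p (T^[n] x) ≤ (if T^[n + 1] x < a then a - T^[n + 1] x else 1) then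
    T^[n] x + ietGap p (T^[n] x)
  else a

/-- For every point `x` of `Δ = [a, b) ⊆ [0, 1)`, the first return time of `x` to `Δ`
under a right-continuous IET `T` is finite: there is `n ≥ 1` with `T^[n] x ∈ Δ`. -/
theorem first_return_time_finite (T : ℝ → ℝ) (hT : IsIET T) (a b : ℝ) (hab : a < b)
    (hsub : Set.Ico a b ⊆ Set.Ico (0 : ℝ) 1) :
    ∀ x ∈ Set.Ico a b, ∃ n : ℕ, 1 ≤ n ∧ T^[n] x ∈ Set.Ico a b := by
  obtain ⟨N, p, σ, hN, hp0, hpN, hplt, hTσ, hbij⟩ := hT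
  have hab01 : 0 ≤ a ∧ b ≤ 1 := by
    constructor
    · exact (hsub ⟨le_refl a, hab⟩).1
    · by_contra hb
      push_neg at hb
      have h1 : max a 1 ∈ Set.Ico a b := ⟨le_max_left _ _, max_lt hab hb⟩
      have h2 := (hsub h1).2
      have := le_max_right a 1
      linarith
  obtain ⟨ha0, hb1⟩ := hab01
  -- monotonicity of partition points
  have pmono : ∀ i j : ℕ, i ≤ j → j ≤ N → p i ≤ p j := by
    intro i j hij hjN
    induction j with
    | zero =>
      have : i = 0 := Nat.le_zero.mp hij
      simp [this]
    | succ m ih =>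
      rcases Nat.lt_or_ge i (m + 1) with h | h
      · have h1 : p i ≤ p m := ih (by omega) (by omega)
        have h2 : p m < p (m + 1) := hplt m (by omega)
        linarith
      · have : i = m + 1 := by omega
        simp [this]
  -- structure of the gap function
  have hgapkey : ∀ z : ℝ, 0 ≤ z → z < 1 →
      ∃ i, i < N ∧ p i ≤ z ∧ z + ietGap p z = p (i + 1) ∧ z < p (i + 1) :=
    fun z hz0 hz1 => ietGap_key hN hp0 hpN hz0 hz1
  have hgappos : ∀ z : ℝ, 0 ≤ z → z < 1 → 0 < ietGap p z := by
    intro z hz0 hz1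
    obtain ⟨i, _, _, hsum, hlt⟩ := hgapkey z hz0 hz1
    linarith
  have hgaple : ∀ z : ℝ, 0 ≤ z → z < 1 → z + ietGap p z ≤ 1 := by
    intro z hz0 hz1
    obtain ⟨i, hiN, _, hsum, _⟩ := hgapkey z hz0 hz1
    have := pmono (i + 1) N (by omega) (le_refl N)
    rw [hsum, ← hpN]
    exact this
  -- translation property on gap neighborhoods
  have htrans : ∀ z : ℝ, 0 ≤ z → z < 1 → ∀ y : ℝ, z ≤ y → y < z + ietGap p z →
      T y = y + (T z - z) := by
    intro z hz0 hz1 y hzy hy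
    obtain ⟨i, hiN, hpi, hsum, hzlt⟩ := hgapkey z hz0 hz1
    rw [hsum] at hy
    have hz' : z ∈ Set.Ico (p i) (p (i + 1)) := ⟨hpi, hzlt⟩
    have hy' : y ∈ Set.Ico (p i) (p (i + 1)) := ⟨le_trans hpi hzy, hy⟩
    rw [hTσ i hiN y hy', hTσ i hiN z hz']
    ring
  -- orbits stay in [0,1)
  have horb : ∀ z : ℝ, z ∈ Set.Ico (0 : ℝ) 1 → ∀ n : ℕ, T^[n] z ∈ Set.Ico (0 : ℝ) 1 := by
    intro z hz n
    induction n with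
    | zero => simpa using hz
    | succ m ih =>
      rw [Function.iterate_succ_apply']
      exact hbij.mapsTo ih
  -- injectivity of iterates on [0,1)
  have hiterinj : ∀ n : ℕ, Set.InjOn (T^[n]) (Set.Ico (0 : ℝ) 1) := by
    intro n
    induction n with
    | zero => simpa using Set.injOn_id _
    | succ m ih =>
      intro u hu v hv huv
      rw [Function.iterate_succ_apply, Function.iterate_succ_apply] at huv
      exact hbij.injOn hu hv (ih (hbij.mapsTo hu) (hbij.mapsTo hv) huv)
  intro x hx
  by_contra hcon
  push_neg at hcon
  have hx01 : x ∈ Set.Ico (0 : ℝ) 1 := hsub hx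
  set d : ℕ → ℝ := ietDelta T p a b x with hd
  have hd0 : d 0 = b - x := rfl
  have hdsucc : ∀ n : ℕ, d (n + 1) = min (d n)
      (min (ietGap p (T^[n] x))
        (if T^[n + 1] x < a then a - T^[n + 1] x else 1)) := fun n => rfl
  have hdpos : ∀ n : ℕ, 0 < d n := by
    intro n
    induction n with
    | zero => rw [hd0]; linarith [hx.2]
    | succ m ih =>
      rw [hdsucc]
      refine lt_min ih (lt_min ?_ ?_)
      · exact hgappos _ (horb x hx01 m).1 (horb x hx01 m).2
      · split_ifs with h
        · linarith
        · norm_num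
  have hdmono : ∀ k n : ℕ, k ≤ n → d n ≤ d k := by
    intro k n hkn
    induction n with
    | zero =>
      have : k = 0 := by omega
      simp [this]
    | succ m ih =>
      rcases Nat.lt_or_ge k (m + 1) with h | h
      · have h1 := ih (by omega)
        have h2 : d (m + 1) ≤ d m := by rw [hdsucc]; exact min_le_left _ _
        linarith
      · have : k = m + 1 := by omega
        simp [this]
  have hdle : ∀ n : ℕ, d n ≤ b - x := fun n => le_trans (hdmono 0 n (Nat.zero_le n)) (le_of_eq hd0)
  have hdgap : ∀ n : ℕ, d (n + 1) ≤ ietGap p (T^[n] x) := by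
    intro n
    rw [hdsucc]
    exact le_trans (min_le_right _ _) (min_le_left _ _)
  -- (P2): iterates are translations on [x, x + d n)
  have hP2 : ∀ n k : ℕ, k ≤ n → ∀ y : ℝ, x ≤ y → y < x + d n →
      T^[k] y = T^[k] x + (y - x) := by
    intro n k
    induction k with
    | zero => intro _ y _ _; simp
    | succ m ih =>
      intro hkn y hxy hyd
      have h1 : T^[m] y = T^[m] x + (y - x) := ih (by omega) y hxy hyd
      have hXm := horb x hx01 m
      have hgle : d n ≤ ietGap p (T^[m] x) := le_trans (hdmono (m + 1) n hkn) (hdgap m)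
      have h2 : T (T^[m] y) = T^[m] y + (T (T^[m] x) - T^[m] x) :=
        htrans (T^[m] x) hXm.1 hXm.2 (T^[m] y) (by rw [h1]; linarith) (by rw [h1]; linarith)
      rw [Function.iterate_succ_apply', Function.iterate_succ_apply', h2, h1]
      ring
  -- (P3): translated iterates stay outside [a, b)
  have hP3 : ∀ n k : ℕ, 1 ≤ k → k ≤ n → ∀ t : ℝ, 0 ≤ t → t < d n →
      T^[k] x + t ∉ Set.Ico a b := by
    intro n k hk1 hkn t ht0 htd hmem
    have hXk := hcon k hk1
    simp only [Set.mem_Ico, not_and, not_lt] at hXk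
    rcases lt_or_ge (T^[k] x) a with hlt | hge
    · obtain ⟨m, rfl⟩ : ∃ m, k = m + 1 := ⟨k - 1, by omega⟩
      have hA : d (m + 1) ≤ a - T^[m + 1] x := by
        rw [hdsucc]
        refine le_trans (min_le_right _ _) (le_trans (min_le_right _ _) ?_)
        rw [if_pos hlt]
      have h1 : d n ≤ d (m + 1) := hdmono (m + 1) n hkn
      have := hmem.1
      linarith
    · have := hXk hge
      have := hmem.2
      linarith
  -- the n disjoint intervals give d n ≤ 1 / n
  have hbound : ∀ n : ℕ, (n : ℝ) * d n ≤ 1 := by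
    intro n
    rcases Nat.eq_zero_or_pos n with rfl | hn0
    · simp
    set I : ℕ → Set ℝ := fun k => Set.Ico (T^[k] x) (T^[k] x + d n) with hI
    have hdisj : ∀ i j : ℕ, i < j → j < n → Disjoint (I i) (I j) := by
      intro i j hij hjn
      rw [Set.disjoint_left]
      intro z hzi hzj
      obtain ⟨hz1, hz2⟩ := hzi
      obtain ⟨hz3, hz4⟩ := hzj
      have hmem1 : x + (z - T^[i] x) ∈ Set.Ico a b := by
        constructor
        · have := hx.1; linarith
        · have := hdle n; linarith
      have hmem2 : x + (z - T^[j] x) ∈ Set.Ico a b := by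
        constructor
        · have := hx.1; linarith
        · have := hdle n; linarith
      have e1 : T^[i] (x + (z - T^[i] x)) = T^[i] x + (z - T^[i] x) := by
        have := hP2 n i (by omega) (x + (z - T^[i] x)) (by linarith) (by linarith)
        rw [this]; ring
      have e2 : T^[j] (x + (z - T^[j] x)) = T^[j] x + (z - T^[j] x) := by
        have := hP2 n j (by omega) (x + (z - T^[j] x)) (by linarith) (by linarith)
        rw [this]; ring
      have e3 : T^[j] (x + (z - T^[j] x)) = T^[i] (T^[j - i] (x + (z - T^[j] x))) := by
        rw [← Function.iterate_add_apply]
        congr 1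
        omega
      have h01a : x + (z - T^[i] x) ∈ Set.Ico (0 : ℝ) 1 := hsub hmem1
      have h01b : x + (z - T^[j] x) ∈ Set.Ico (0 : ℝ) 1 := hsub hmem2
      have hTm01 : T^[j - i] (x + (z - T^[j] x)) ∈ Set.Ico (0 : ℝ) 1 := horb _ h01b _
      have e4 : T^[i] (x + (z - T^[i] x)) = T^[i] (T^[j - i] (x + (z - T^[j] x))) := by
        rw [e1, ← e3, e2]
        ring
      have e5 : x + (z - T^[i] x) = T^[j - i] (x + (z - T^[j] x)) :=
        hiterinj i h01a hTm01 e4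
      have e6 : T^[j - i] (x + (z - T^[j] x)) = T^[j - i] x + (z - T^[j] x) := by
        have := hP2 n (j - i) (by omega) (x + (z - T^[j] x)) (by linarith) (by linarith)
        rw [this]; ring
      have : T^[j - i] x + (z - T^[j] x) ∈ Set.Ico a b := by
        rw [← e6, ← e5]; exact hmem1
      exact hP3 n (j - i) (by omega) (by omega) (z - T^[j] x) (by linarith) (by linarith) this
    have hpair : (↑(Finset.range n) : Set ℕ).PairwiseDisjoint I := by
      intro i hi j hj hne
      simp only [Finset.coe_range, Set.mem_Iio] at hi hj
      rcases lt_or_gt_of_ne hne with h | h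
      · exact hdisj i j h hj
      · exact (hdisj j i h hi).symm
    have hU : (⋃ k ∈ Finset.range n, I k) ⊆ Set.Ico (0 : ℝ) 1 := by
      intro z hz
      simp only [Set.mem_iUnion, Finset.mem_range, exists_prop] at hz
      obtain ⟨k, hk, hzk1, hzk2⟩ := hz
      constructor
      · exact le_trans (horb x hx01 k).1 hzk1
      · have h1 : d n ≤ ietGap p (T^[k] x) :=
          le_trans (hdmono (k + 1) n (by omega)) (hdgap k)
        have h2 := hgaple (T^[k] x) (horb x hx01 k).1 (horb x hx01 k).2
        linarith
    have hvol : MeasureTheory.volume (⋃ k ∈ Finset.range n, I k)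
        = ∑ k ∈ Finset.range n, MeasureTheory.volume (I k) :=
      MeasureTheory.measure_biUnion_finset hpair (fun k _ => measurableSet_Ico)
    have hIvol : ∀ k : ℕ, MeasureTheory.volume (I k) = ENNReal.ofReal (d n) := by
      intro k
      rw [hI]
      simp [Real.volume_Ico]
    have hle1 : ∑ k ∈ Finset.range n, MeasureTheory.volume (I k) ≤ 1 := by
      rw [← hvol]
      calc MeasureTheory.volume (⋃ k ∈ Finset.range n, I k)
          ≤ MeasureTheory.volume (Set.Ico (0 : ℝ) 1) := MeasureTheory.measure_mono hU
        _ = 1 := by simp [Real.volume_Ico]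
    have hsum : ∑ k ∈ Finset.range n, MeasureTheory.volume (I k)
        = (n : ℝ≥0∞) * ENNReal.ofReal (d n) := by
      simp [hIvol, Finset.sum_const, nsmul_eq_mul]
    rw [hsum] at hle1
    have : ENNReal.ofReal ((n : ℝ) * d n) ≤ 1 := by
      rw [ENNReal.ofReal_mul (by positivity), ENNReal.ofReal_natCast]
      exact hle1
    exact ENNReal.ofReal_le_one.mp this
  -- the set of shrinking times is infinite
  have hSun : ∀ M : ℕ, ∃ n : ℕ, M ≤ n ∧ d (n + 1) < d n := by
    intro M
    by_contra hno
    push_neg at hno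
    have hconst : ∀ k : ℕ, d (M + k) = d M := by
      intro k
      induction k with
      | zero => rfl
      | succ m ih =>
        have h1 : d (M + m) ≤ d (M + m + 1) := hno (M + m) (by omega)
        have h2 : d (M + m + 1) ≤ d (M + m) := hdmono (M + m) (M + m + 1) (by omega)
        have : d (M + m + 1) = d (M + m) := le_antisymm h2 h1
        rw [show M + (m + 1) = M + m + 1 by omega, this, ih]
    obtain ⟨K, hK⟩ := exists_nat_gt (1 / d M)
    have hpos := hdpos M
    have h2 := hbound (M + K)
    rw [hconst K] at h2
    have h3 : 1 < (K : ℝ) * d M := by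
      rw [div_lt_iff₀ hpos] at hK
      linarith
    have h4 : (K : ℝ) ≤ ((M + K : ℕ) : ℝ) := by
      push_cast
      linarith [Nat.cast_nonneg (α := ℝ) M]
    nlinarith
  have hSinf : {n : ℕ | d (n + 1) < d n}.Infinite := by
    by_contra hfin
    rw [Set.not_infinite] at hfin
    obtain ⟨M, hM⟩ := hfin.bddAbove
    obtain ⟨n, hn1, hn2⟩ := hSun (M + 1)
    have := hM hn2
    omega
  -- charge analysis
  have hcharge : ∀ n : ℕ, d (n + 1) < d n →
      (ietCharge T p a x n ∈ (p '' {i | i ≤ N}) ∪ {a}) ∧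
      ∃ r : ℕ, n ≤ r ∧ r ≤ n + 1 ∧ (r ≤ n ∨ ietCharge T p a x n = a) ∧
        T^[r] (x + d (n + 1)) = ietCharge T p a x n := by
    intro n hs
    have hXn01 := horb x hx01 n
    have hminGA : d (n + 1) = min (ietGap p (T^[n] x))
        (if T^[n + 1] x < a then a - T^[n + 1] x else 1) := by
      have h1 := hdsucc n
      rcases le_or_gt (d n) (min (ietGap p (T^[n] x))
        (if T^[n + 1] x < a then a - T^[n + 1] x else 1)) with h | h
      · rw [min_eq_left h] at h1
        exact absurd h1 (by intro he; rw [he] at hs; exact lt_irrefl _ hs)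
      · rw [h1, min_eq_right h.le]
    by_cases hGA : ietGap p (T^[n] x) ≤ (if T^[n + 1] x < a then a - T^[n + 1] x else 1)
    · have hdG : d (n + 1) = ietGap p (T^[n] x) := by rw [hminGA, min_eq_left hGA]
      have hqn : ietCharge T p a x n = T^[n] x + ietGap p (T^[n] x) := by
        rw [ietCharge, if_pos hGA]
      obtain ⟨i, hiN, _, hsum, _⟩ := hgapkey _ hXn01.1 hXn01.2
      constructor
      · left
        exact ⟨i + 1, by simp; omega, by rw [hqn, ← hsum]⟩
      · refine ⟨n, le_refl _, by omega, Or.inl (le_refl _), ?_⟩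
        have := hP2 n n (le_refl n) (x + d (n + 1))
          (by linarith [hdpos (n + 1)]) (by linarith)
        rw [this, hqn, hdG]
        ring
    · push_neg at hGA
      have hdA : d (n + 1) = (if T^[n + 1] x < a then a - T^[n + 1] x else 1) := by
        rw [hminGA, min_eq_right hGA.le]
      have hXa : T^[n + 1] x < a := by
        by_contra hge
        rw [if_neg hge] at hdA
        have h1 : d n ≤ b - x := hdle n
        linarith [hx01.1]
      rw [if_pos hXa] at hdA
      rw [if_pos hXa] at hGA
      have hcond : ¬ (ietGap p (T^[n] x) ≤ if T^[n + 1] x < a then a - T^[n + 1] x else 1) := by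
        rw [if_pos hXa]; exact not_le.mpr hGA
      have hqn : ietCharge T p a x n = a := by
        rw [ietCharge, if_neg hcond]
      constructor
      · right; simp [hqn]
      · refine ⟨n + 1, by omega, le_refl _, Or.inr hqn, ?_⟩
        have e1 : T^[n] (x + d (n + 1)) = T^[n] x + d (n + 1) := by
          have := hP2 n n (le_refl n) (x + d (n + 1))
            (by linarith [hdpos (n + 1)]) (by linarith)
          rw [this]; ring
        have e2 : T (T^[n] x + d (n + 1)) = (T^[n] x + d (n + 1)) + (T (T^[n] x) - T^[n] x) :=
          htrans (T^[n] x) hXn01.1 hXn01.2 _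
            (by linarith [hdpos (n + 1)]) (by linarith [hdA, hGA])
        rw [Function.iterate_succ_apply', e1, e2, hqn]
        have e3 : T (T^[n] x) = T^[n + 1] x := (Function.iterate_succ_apply' T n x).symm
        rw [e3]
        linarith
  -- no point is charged twice
  have haux : ∀ n n' : ℕ, d (n + 1) < d n → d (n' + 1) < d n' → n < n' →
      ietCharge T p a x n ≠ ietCharge T p a x n' := by
    intro n n' hn hn' hlt hQ
    obtain ⟨_, r, hr0, hr1, hr2, hrT⟩ := hcharge n hn
    obtain ⟨_, r', hr0', hr1', hr2', hrT'⟩ := hcharge n' hn'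
    have hdd : d (n' + 1) < d (n + 1) :=
      lt_of_lt_of_le hn' (hdmono (n + 1) n' (by omega))
    have hw : x + d (n + 1) ∈ Set.Ico a b :=
      ⟨by linarith [hx.1, hdpos (n + 1)], by linarith [hdle n]⟩
    have hw' : x + d (n' + 1) ∈ Set.Ico a b :=
      ⟨by linarith [hx.1, hdpos (n' + 1)], by linarith [hdle n']⟩
    have hrr : r ≤ r' := by omega
    have heq : T^[r] (x + d (n + 1)) = T^[r'] (x + d (n' + 1)) := by
      rw [hrT, hrT', hQ]
    rcases eq_or_lt_of_le hrr with rfl | hltr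
    · have := hiterinj r (hsub hw) (hsub hw') heq
      linarith [hdd, add_left_cancel this]
    · have hm1 : 1 ≤ r' - r := by omega
      have heq2 : T^[r] (T^[r' - r] (x + d (n' + 1))) = T^[r] (x + d (n + 1)) := by
        rw [← Function.iterate_add_apply]
        rw [show r + (r' - r) = r' by omega]
        exact heq.symm
      have hTm01 : T^[r' - r] (x + d (n' + 1)) ∈ Set.Ico (0 : ℝ) 1 := horb _ (hsub hw') _
      have heq3 : T^[r' - r] (x + d (n' + 1)) = x + d (n + 1) :=
        hiterinj r hTm01 (hsub hw) heq2
      rcases le_or_gt (r' - r) n' with hmn' | hmn'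
      · have e := hP2 n' (r' - r) hmn' (x + d (n' + 1))
          (by linarith [hdpos (n' + 1)]) (by linarith)
        have hmem : T^[r' - r] x + d (n' + 1) ∈ Set.Ico a b := by
          have : T^[r' - r] x + d (n' + 1) = x + d (n + 1) := by
            rw [← heq3, e]; ring
          rw [this]; exact hw
        exact hP3 n' (r' - r) hm1 hmn' (d (n' + 1))
          (le_of_lt (hdpos _)) hn' hmem
      · have hreq : r = 0 := by omega
        have hr'eq : r' = n' + 1 := by omega
        have hq'a : ietCharge T p a x n' = a := by
          rcases hr2' with h | h
          · omega
          · exact h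
        have : x + d (n + 1) = a := by
          rw [hreq] at hrT
          simp only [Function.iterate_zero, id_eq] at hrT
          rw [hrT, hQ, hq'a]
        linarith [hx.1, hdpos (n + 1)]
  -- assemble the contradiction
  have hinjQ : Set.InjOn (ietCharge T p a x) {n : ℕ | d (n + 1) < d n} := by
    intro n hn n' hn' he
    by_contra hne
    rcases lt_or_gt_of_ne hne with h | h
    · exact haux n n' hn hn' h he
    · exact haux n' n hn' hn h he.symm
  have himg : ietCharge T p a x '' {n : ℕ | d (n + 1) < d n} ⊆ (p '' {i | i ≤ N}) ∪ {a} := by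
    rintro z ⟨n, hn, rfl⟩
    exact (hcharge n hn).1
  have hfinC : ((p '' {i | i ≤ N}) ∪ {a} : Set ℝ).Finite :=
    ((Set.finite_Iic N).image p).union (Set.finite_singleton a)
  exact (hfinC.subset himg).not_infinite (hSinf.image hinjQ)
end

section
/- Let N > 1, let T : [0,1) → [0,1) be a right-continuous interval exchange transformation with N−1 discontinuities, let Δ = [a,b) ⊆ [0,1), and let T_Δ be the first return map induced by T on Δ. If α ∈ Δ is a discontinuity of T_Δ, then, writing h = h_{Δ,T}(α): (a) T^i α ∉ [a,b) for all i ∈ {1, …, h−1}; (b) T^h α = T_Δ α; and (c) at least one of the following holds: (c.1) T^i α is a discontinuity of T for some i ∈ {0, …, h−1}; (c.2) T^h α = a; (c.3) there is i ∈ {1, …, h−1} such that lim_{x→α⁻} T^i x = b. -/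
/-- The set of discontinuities of `T` viewed as a map of `[c, d)`. -/
def Discont (T : ℝ → ℝ) (c d : ℝ) : Set ℝ :=
  {x | x ∈ Set.Ico c d ∧ ¬ ContinuousWithinAt T (Set.Ico c d) x}

/-- The first return time of `x` to `Δ` under `T`: `min {n ≥ 1 | T^[n] x ∈ Δ}`. -/
noncomputable def retTime (T : ℝ → ℝ) (Δ : Set ℝ) (x : ℝ) : ℕ :=
  sInf {n : ℕ | 1 ≤ n ∧ T^[n] x ∈ Δ}

/-- The first return (induced) map of `T` on `Δ`. -/
noncomputable def retMap (T : ℝ → ℝ) (Δ : Set ℝ) (x : ℝ) : ℝ :=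
  T^[retTime T Δ x] x

open Set Filter Topology MeasureTheory

theorem exists_mem_Ico_of_le_of_lt {p : ℕ → ℝ} {n : ℕ} {x : ℝ} (h0 : p 0 ≤ x) (hn : x < p n) :
    ∃ i < n, x ∈ Ico (p i) (p (i + 1)) := by
  classical
  obtain ⟨m, rfl⟩ : ∃ m, n = m + 1 :=
    Nat.exists_eq_succ_of_ne_zero (by rintro rfl; exact (h0.not_gt hn).elim)
  have hex : ∃ i, x < p (i + 1) := ⟨m, hn⟩
  refine ⟨Nat.find hex, Nat.lt_succ_of_le (Nat.find_min' hex hn), ?_, Nat.find_spec hex⟩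
  · match h : Nat.find hex with
    | 0 => exact h0
    | k + 1 => exact not_lt.1 (Nat.find_min hex (h ▸ k.lt_succ_self))

theorem Set.InjOn.eq_iterate_sub_of_iterate_eq {α : Type*} {f : α → α} {s : Set α}
    (hinj : InjOn f s) (hmaps : MapsTo f s s) {x y : α} (hx : x ∈ s) (hy : y ∈ s) {i j : ℕ}
    (hij : i ≤ j) (h : f^[i] x = f^[j] y) : x = f^[j - i] y := by
  refine hinj.iterate hmaps i hx (hmaps.iterate _ hy) ?_
  rw [h, ← Function.iterate_add_apply, Nat.add_sub_cancel' hij]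

theorem Set.InjOn.subsingleton_setOf_iterate_eq_before_return {α : Type*} {f : α → α}
    {S Δ : Set α} (hinj : InjOn f S) (hmaps : MapsTo f S S) (hΔ : Δ ⊆ S) (s : α) :
    {z ∈ Δ | ∃ j, 1 ≤ j ∧ f^[j] z = s ∧ ∀ i, 1 ≤ i → i < j → f^[i] z ∉ Δ}.Subsingleton := by
  suffices key : ∀ z ∈ Δ, ∀ z' ∈ Δ, ∀ j j', 1 ≤ j → f^[j] z = s → f^[j'] z' = s →
      (∀ i, 1 ≤ i → i < j' → f^[i] z' ∉ Δ) → j ≤ j' → z = z' by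
    rintro z ⟨hz, j, hj, hzs, hzΔ⟩ z' ⟨hz', j', hj', hzs', hzΔ'⟩
    rcases le_total j j' with h | h
    · exact key z hz z' hz' j j' hj hzs hzs' hzΔ' h
    · exact (key z' hz' z hz j' j hj' hzs' hzs hzΔ h).symm
  intro z hz z' hz' j j' hj hzs hzs' hbefore hjj'
  have hcancel :=
    hinj.eq_iterate_sub_of_iterate_eq hmaps (hΔ hz) (hΔ hz') hjj' (hzs.trans hzs'.symm)
  rcases hjj'.eq_or_lt with rfl | hlt
  · simpa using hcancel
  · exact absurd (hcancel ▸ hz) (hbefore _ (by omega) (by omega))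

theorem eventually_iterate_eq_add {L : ℝ → Filter ℝ}
    (hL : ∀ x t, Tendsto (· + t) (L x) (L (x + t))) {f : ℝ → ℝ} {x : ℝ} {n : ℕ}
    (hf : ∀ j < n, ∀ᶠ u in L (f^[j] x), f u = u + (f (f^[j] x) - f^[j] x)) :
    ∀ᶠ y in L x, f^[n] y = y + (f^[n] x - x) := by
  induction n with
  | zero => simp
  | succ n ih =>
    have hn := ih fun j hj => hf j (by omega)
    have htendsto : Tendsto f^[n] (L x) (L (f^[n] x)) := by
      refine ((hL x (f^[n] x - x)).congr' (hn.mono fun y hy => hy.symm)).mono_right ?_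
      rw [add_sub_cancel]
    filter_upwards [hn, htendsto.eventually (hf n n.lt_succ_self)] with y hy hfy
    rw [Function.iterate_succ_apply', Function.iterate_succ_apply', hfy, hy]
    ring

theorem tendsto_add_const_nhdsGE (x t : ℝ) : Tendsto (· + t) (𝓝[≥] x) (𝓝[≥] (x + t)) :=
  (continuous_add_const t).continuousWithinAt.tendsto_nhdsWithin fun _ hy =>
    add_le_add_left (mem_Ici.1 hy) t

theorem tendsto_add_const_nhdsLT (x t : ℝ) : Tendsto (· + t) (𝓝[<] x) (𝓝[<] (x + t)) :=
  (continuous_add_const t).continuousWithinAt.tendsto_nhdsWithin fun _ hy =>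
    add_lt_add_left (mem_Iio.1 hy) t

theorem mem_Ico_of_frequently_of_eventually_eq_add {f : ℝ → ℝ} {z a b : ℝ}
    (hfreq : ∃ᶠ y in 𝓝[≥] z, f y ∈ Ico a b) (heq : ∀ᶠ y in 𝓝[≥] z, f y = y + (f z - z)) :
    f z ∈ Ico a b := by
  have h := hfreq.and_eventually heq
  constructor
  · have hclosed : IsClosed {y : ℝ | a ≤ y + (f z - z)} :=
      isClosed_le continuous_const (continuous_add_const _)
    simpa using hclosed.mem_of_frequently_of_tendsto
      (h.mono fun y hy => show a ≤ y + (f z - z) from hy.2 ▸ hy.1.1)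
      (tendsto_nhdsWithin_of_tendsto_nhds tendsto_id)
  · obtain ⟨y, ⟨hyab, hyeq⟩, hzy⟩ := (h.and_eventually self_mem_nhdsWithin).exists
    have : z ≤ y := hzy
    linarith [hyab.2]

theorem continuousWithinAt_iterate {f : ℝ → ℝ} {s : Set ℝ} {x : ℝ} {n : ℕ} (hmaps : MapsTo f s s)
    (hf : ∀ i < n, ContinuousWithinAt f s (f^[i] x)) : ContinuousWithinAt f^[n] s x := by
  induction n with
  | zero => exact continuousWithinAt_id
  | succ n ih =>
    rw [Function.iterate_succ']
    exact (hf n n.lt_succ_self).comp (ih fun i hi => hf i (by omega)) (hmaps.iterate n)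

theorem measurableSet_and_volume_image_of_hasDerivAt_one {f : ℝ → ℝ} {s B : Set ℝ}
    (hs : MeasurableSet s) (hB : B.Countable) (hinj : InjOn f s)
    (hderiv : ∀ x ∈ s, x ∉ B → HasDerivAt f 1 x) :
    MeasurableSet (f '' s) ∧ volume (f '' s) = volume s := by
  have hderiv' : ∀ x ∈ s \ B, HasDerivWithinAt f 1 (s \ B) x :=
    fun x hx => (hderiv x hx.1 hx.2).hasDerivWithinAt
  have hsB : MeasurableSet (s \ B) := hs.diff hB.measurableSet
  have hnull : (f '' (s ∩ B)).Countable := (hB.mono inter_subset_right).image f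
  have hsplit : f '' s = f '' (s \ B) ∪ f '' (s ∩ B) := by
    rw [← image_union, sdiff_union_inter]
  refine ⟨hsplit ▸ (hsB.image_of_continuousOn_injOn
    (fun x hx => (hderiv' x hx).continuousWithinAt) (hinj.mono sdiff_subset)).union
    hnull.measurableSet, ?_⟩
  have himage := lintegral_image_eq_lintegral_abs_deriv_mul hsB hderiv'
    (hinj.mono sdiff_subset) 1
  simp only [abs_one, ENNReal.ofReal_one, Pi.one_apply, mul_one, setLIntegral_one] at himage
  rw [hsplit,
    measure_congr (union_ae_eq_left_of_ae_eq_empty (ae_eq_empty.2 (hnull.measure_zero volume))),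
    himage, measure_congr (sdiff_null_ae_eq_self (hB.measure_zero volume))]

section ReturnTime

variable {T : ℝ → ℝ} {Δ : Set ℝ} {x : ℝ}

theorem one_le_retTime_and_mem (h : ∃ n, 1 ≤ n ∧ T^[n] x ∈ Δ) :
    1 ≤ retTime T Δ x ∧ T^[retTime T Δ x] x ∈ Δ :=
  Nat.sInf_mem h

theorem iterate_notMem_of_lt_retTime {i : ℕ} (hi : 1 ≤ i) (hlt : i < retTime T Δ x) :
    T^[i] x ∉ Δ :=
  fun hmem => Nat.notMem_of_lt_sInf hlt ⟨hi, hmem⟩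

theorem retTime_eq {n : ℕ} (hn : 1 ≤ n) (hmem : T^[n] x ∈ Δ)
    (hbefore : ∀ i, 1 ≤ i → i < n → T^[i] x ∉ Δ) : retTime T Δ x = n :=
  le_antisymm (Nat.sInf_le ⟨hn, hmem⟩)
    (le_csInf ⟨n, hn, hmem⟩ fun _ hm => not_lt.1 fun hlt => hbefore _ hm.1 hlt hm.2)

end ReturnTime

/-- The case `f α = b` is where right-continuity enters: it is excluded by the left limit when
`a < α`, and `f` moves `[α, α + ε)` to the right of `b` when `α = a`. -/
theorem eventually_notMem_Ico {f : ℝ → ℝ} {a b c d α : ℝ} (hsub : Ico a b ⊆ Ico c d)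
    (hα : α ∈ Ico a b) (hcont : ContinuousWithinAt f (Ico c d) α) (hfα : f α ∉ Ico a b)
    (hright : ∀ᶠ y in 𝓝[≥] α, f y = y + (f α - α)) (hleft : ¬Tendsto f (𝓝[<] α) (𝓝 b)) :
    ∀ᶠ y in 𝓝[Ico a b] α, f y ∉ Ico a b := by
  have htendsto : Tendsto f (𝓝[Ico a b] α) (𝓝 (f α)) := (hcont.mono hsub).tendsto
  rcases lt_or_ge (f α) a with hlt | hge
  · exact (htendsto.eventually_lt_const hlt).mono fun y hy hyab => hy.not_ge hyab.1
  have hb : b ≤ f α := not_lt.1 fun hlt => hfα ⟨hge, hlt⟩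
  rcases hb.lt_or_eq with hlt | heq
  · exact (htendsto.eventually_const_lt hlt).mono fun y hy hyab => hy.not_ge hyab.2.le
  rcases hα.1.lt_or_eq with haα | rfl
  · refine absurd ?_ hleft
    rw [heq]
    refine hcont.tendsto.mono_left (nhdsWithin_le_of_mem ?_)
    exact mem_of_superset (Ioo_mem_nhdsLT haα) fun y hy => hsub ⟨hy.1.le, hy.2.trans hα.2⟩
  · filter_upwards [nhdsWithin_mono _ Ico_subset_Ici_self hright, self_mem_nhdsWithin]
      with y hy hyab
    exact fun h => h.2.not_ge (by linarith [hyab.1])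

namespace IsIETOn

variable {T : ℝ → ℝ} {c d : ℝ}

theorem bijOn (hT : IsIETOn T c d) : BijOn T (Ico c d) (Ico c d) := by
  obtain ⟨-, -, -, -, -, -, -, -, h⟩ := hT
  exact h

theorem eventually_nhdsGE (hT : IsIETOn T c d) {x : ℝ} (hx : x ∈ Ico c d) :
    ∀ᶠ y in 𝓝[≥] x, T y = y + (T x - x) := by
  obtain ⟨n, p, σ, -, hp0, hpn, -, hσ, -⟩ := hT
  obtain ⟨i, hi, hxi⟩ := exists_mem_Ico_of_le_of_lt (hp0 ▸ hx.1) (hpn ▸ hx.2)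
  filter_upwards [Ico_mem_nhdsGE hxi.2] with y hy
  rw [hσ i hi y ⟨hxi.1.trans hy.1, hy.2⟩, hσ i hi x hxi]
  ring

theorem exists_finite_eventually_nhds (hT : IsIETOn T c d) :
    ∃ B : Set ℝ, B.Finite ∧ ∀ x ∈ Ico c d, x ∉ B → ∀ᶠ y in 𝓝 x, T y = y + (T x - x) := by
  obtain ⟨n, p, σ, -, hp0, hpn, -, hσ, -⟩ := hT
  refine ⟨p '' Iic n, (finite_Iic n).image p, fun x hx hxB => ?_⟩
  obtain ⟨i, hi, hxi⟩ := exists_mem_Ico_of_le_of_lt (hp0 ▸ hx.1) (hpn ▸ hx.2)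
  have hpx : p i < x := hxi.1.lt_of_ne fun h => hxB ⟨i, mem_Iic.2 hi.le, h⟩
  filter_upwards [Ioo_mem_nhds hpx hxi.2] with y hy
  rw [hσ i hi y (Ioo_subset_Ico_self hy), hσ i hi x hxi]
  ring

theorem eventually_iterate_nhdsGE (hT : IsIETOn T c d) {x : ℝ} (hx : x ∈ Ico c d) (n : ℕ) :
    ∀ᶠ y in 𝓝[≥] x, T^[n] y = y + (T^[n] x - x) :=
  eventually_iterate_eq_add tendsto_add_const_nhdsGE fun j _ =>
    hT.eventually_nhdsGE (hT.bijOn.mapsTo.iterate j hx)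

theorem eventually_iterate_nhdsLT (hT : IsIETOn T c d) {B : Set ℝ}
    (hB : ∀ x ∈ Ico c d, x ∉ B → ∀ᶠ y in 𝓝 x, T y = y + (T x - x)) {z : ℝ} (hz : z ∈ Ico c d)
    {n : ℕ} (hzB : ∀ j < n, T^[j] z ∉ B) :
    ∀ᶠ y in 𝓝[<] z, T^[n] y = y + (T^[n] z - z) :=
  eventually_iterate_eq_add tendsto_add_const_nhdsLT fun j hj =>
    nhdsWithin_le_nhds (hB _ (hT.bijOn.mapsTo.iterate j hz) (hzB j hj))

theorem measurableSet_and_volume_image_iterate (hT : IsIETOn T c d) {A : Set ℝ}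
    (hA : MeasurableSet A) (hAsub : A ⊆ Ico c d) (n : ℕ) :
    MeasurableSet (T^[n] '' A) ∧ volume (T^[n] '' A) = volume A := by
  obtain ⟨B, hBfin, hB⟩ := hT.exists_finite_eventually_nhds
  induction n with
  | zero => simpa using hA
  | succ n ih =>
    have hsub : T^[n] '' A ⊆ Ico c d := ((hT.bijOn.mapsTo.iterate n).mono_left hAsub).image_subset
    have hstep := measurableSet_and_volume_image_of_hasDerivAt_one ih.1 hBfin.countable
      (hT.bijOn.injOn.mono hsub) fun x hx hxB =>
        ((hasDerivAt_id x).add_const _).congr_of_eventuallyEq (hB x (hsub hx) hxB)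
    rw [Function.iterate_succ', image_comp]
    exact ⟨hstep.1, hstep.2.trans ih.2⟩

theorem exists_iterate_mem_of_volume_ne_zero (hT : IsIETOn T c d) {A : Set ℝ}
    (hA : MeasurableSet A) (hAsub : A ⊆ Ico c d) (hA0 : volume A ≠ 0) :
    ∃ y ∈ A, ∃ n, 1 ≤ n ∧ T^[n] y ∈ A := by
  obtain ⟨K, hK⟩ := ENNReal.exists_nat_mul_gt hA0 (measure_ne_top (volume.restrict (Ico c d)) univ)
  have himage := hT.measurableSet_and_volume_image_iterate hA hAsub
  have hvol : ∀ k, volume.restrict (Ico c d) (T^[k] '' A) = volume A := fun k => by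
    rw [Measure.restrict_apply (himage k).1,
      inter_eq_left.2 ((hT.bijOn.mapsTo.iterate k).mono_left hAsub).image_subset, (himage k).2]
  obtain ⟨i, -, j, -, hij, w, ⟨y, hy, rfl⟩, ⟨y', hy', hyy'⟩⟩ :=
    exists_nonempty_inter_of_measure_univ_lt_sum_measure (s := Finset.range K)
      (t := fun k => T^[k] '' A) (volume.restrict (Ico c d))
      (fun k _ => (himage k).1.nullMeasurableSet)
      (by rwa [Finset.sum_congr rfl fun k _ => hvol k, Finset.sum_const, Finset.card_range,
        nsmul_eq_mul])
  wlog hlt : i < j generalizing i j y y'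
  · exact this j i (Ne.symm hij) y' hy' y hy hyy'.symm (by omega)
  refine ⟨y', hy', j - i, by omega, ?_⟩
  rw [← hT.bijOn.injOn.eq_iterate_sub_of_iterate_eq hT.bijOn.mapsTo (hAsub hy) (hAsub hy')
    hlt.le hyy'.symm]
  exact hy

theorem exists_entry_point (hT : IsIETOn T c d) {a b x η : ℝ} (hsub : Ico a b ⊆ Ico c d)
    (hx : x ∈ Ico a b) (hx_never : ∀ n, 1 ≤ n → T^[n] x ∉ Ico a b) (hη : 0 < η)
    (hηb : x + η ≤ b) :
    ∃ z ∈ Ioo x (x + η), ∃ n, 1 ≤ n ∧ T^[n] z ∈ Ico a b ∧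
      (∀ j, 1 ≤ j → j < n → T^[j] z ∉ Ico a b) ∧ ∀ y ∈ Ico x z, T^[n] y ∉ Ico a b := by
  classical
  have hI : Ico x (x + η) ⊆ Ico a b := Ico_subset_Ico hx.1 hηb
  have hex : ∃ n, 1 ≤ n ∧ ∃ y ∈ Ico x (x + η), T^[n] y ∈ Ico a b := by
    obtain ⟨y, hy, n, hn, hyn⟩ := hT.exists_iterate_mem_of_volume_ne_zero measurableSet_Ico
      (hI.trans hsub) (by simp [hη])
    exact ⟨n, hn, y, hy, hI hyn⟩
  set n := Nat.find hex
  obtain ⟨hn1, y₀, hy₀, hy₀n⟩ := Nat.find_spec hex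
  set Y := {y ∈ Ico x (x + η) | T^[n] y ∈ Ico a b}
  have hYne : Y.Nonempty := ⟨y₀, hy₀, hy₀n⟩
  have hglb : IsGLB Y (sInf Y) := isGLB_csInf hYne ⟨x, fun y hy => hy.1.1⟩
  set z := sInf Y
  have hzI : z ∈ Ico x (x + η) := ⟨hglb.2 fun y hy => hy.1.1, (hglb.1 ⟨hy₀, hy₀n⟩).trans_lt hy₀.2⟩
  have hzn : T^[n] z ∈ Ico a b :=
    mem_Ico_of_frequently_of_eventually_eq_add ((hglb.frequently_mem hYne).mono fun y hy => hy.2)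
      (hT.eventually_iterate_nhdsGE (hsub (hI hzI)) n)
  have hxz : x < z := hzI.1.lt_of_ne fun h => hx_never n hn1 (h ▸ hzn)
  refine ⟨z, ⟨hxz, hzI.2⟩, n, hn1, hzn, fun j hj hjn hjz => Nat.find_min hex hjn ⟨hj, z, hzI, hjz⟩,
    fun y hy hyn => hy.2.not_ge (hglb.1 ⟨⟨hy.1, hy.2.trans hzI.2⟩, hyn⟩)⟩

theorem iterate_eq_or_exists_mem_of_entry (hT : IsIETOn T c d) {B : Set ℝ}
    (hB : ∀ x ∈ Ico c d, x ∉ B → ∀ᶠ y in 𝓝 x, T y = y + (T x - x)) {a b x z : ℝ} {n : ℕ}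
    (hz : z ∈ Ico c d) (hxz : x < z) (hzn : T^[n] z ∈ Ico a b)
    (hleft : ∀ y ∈ Ico x z, T^[n] y ∉ Ico a b) :
    T^[n] z = a ∨ ∃ j < n, T^[j] z ∈ B := by
  by_contra! h
  obtain ⟨ha, hzB⟩ := h
  have hmem : Ioo a b ∈ 𝓝 (T^[n] z) := Ioo_mem_nhds (hzn.1.lt_of_ne' ha) hzn.2
  have htendsto : Tendsto (· + (T^[n] z - z)) (𝓝[<] z) (𝓝 (T^[n] z)) := by
    simpa using ((continuous_add_const (T^[n] z - z)).tendsto z).mono_left nhdsWithin_le_nhds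
  obtain ⟨y, hyeq, hyab, hyxz⟩ := ((hT.eventually_iterate_nhdsLT hB hz hzB).and
    ((htendsto.eventually_mem hmem).and (Ico_mem_nhdsLT hxz))).exists
  exact hleft y hyxz (hyeq ▸ Ioo_subset_Ico_self hyab)

theorem exists_iterate_mem (hT : IsIETOn T c d) {a b x : ℝ} (hsub : Ico a b ⊆ Ico c d)
    (hx : x ∈ Ico a b) : ∃ n, 1 ≤ n ∧ T^[n] x ∈ Ico a b := by
  by_contra! hx_never
  obtain ⟨B, hBfin, hB⟩ := hT.exists_finite_eventually_nhds
  set C := B ∪ ⋃ s ∈ insert a B,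
    {z ∈ Ico a b | ∃ j, 1 ≤ j ∧ T^[j] z = s ∧ ∀ i, 1 ≤ i → i < j → T^[i] z ∉ Ico a b}
  have hC : C.Finite := hBfin.union ((hBfin.insert a).biUnion fun s _ =>
    (hT.bijOn.injOn.subsingleton_setOf_iterate_eq_before_return hT.bijOn.mapsTo hsub s).finite)
  have hfreq : ∃ᶠ z in 𝓝[>] x, z ∈ C := by
    rw [(nhdsGT_basis x).frequently_iff]
    intro ε hε
    obtain ⟨z, hz, n, hn, hzn, hbefore, hleft⟩ := hT.exists_entry_point hsub hx hx_never
      (η := min ε b - x) (by simp [hε, hx.2]) (by simp)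
    have hzε : z < ε := hz.2.trans_le (by simp)
    have hzab : z ∈ Ico a b := ⟨hx.1.trans hz.1.le, hz.2.trans_le (by simp)⟩
    refine ⟨z, ⟨hz.1, hzε⟩, ?_⟩
    rcases hT.iterate_eq_or_exists_mem_of_entry hB (hsub hzab) hz.1 hzn hleft with
      ha | ⟨j, hjn, hjB⟩
    · exact Or.inr (mem_biUnion (mem_insert a B) ⟨hzab, n, hn, ha, hbefore⟩)
    · rcases Nat.eq_zero_or_pos j with rfl | hj
      · exact Or.inl hjB
      · exact Or.inr (mem_biUnion (mem_insert_of_mem a hjB)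
          ⟨hzab, j, hj, rfl, fun i hi hij => hbefore i hi (hij.trans hjn)⟩)
  have hev : ∀ᶠ z in 𝓝[>] x, z ∉ C := by
    filter_upwards [nhdsWithin_le_nhds ((hC.sdiff (t := {x})).isClosed.compl_mem_nhds
      fun h => h.2 rfl), self_mem_nhdsWithin] with z hz hxz hzC
    exact hz ⟨hzC, ne_of_gt hxz⟩
  exact hfreq hev

theorem continuousWithinAt_retMap (hT : IsIETOn T c d) {a b α : ℝ}
    (hsub : Ico a b ⊆ Ico c d) (hα : α ∈ Ico a b)
    (hcont : ∀ i < retTime T (Ico a b) α, ContinuousWithinAt T (Ico c d) (T^[i] α))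
    (ha : T^[retTime T (Ico a b) α] α ≠ a)
    (hb : ∀ i, 1 ≤ i → i < retTime T (Ico a b) α → ¬Tendsto T^[i] (𝓝[<] α) (𝓝 b)) :
    ContinuousWithinAt (retMap T (Ico a b)) (Ico a b) α := by
  set h := retTime T (Ico a b) α
  obtain ⟨h1, hret⟩ := one_le_retTime_and_mem (hT.exists_iterate_mem hsub hα)
  have hiter : ∀ i ≤ h, ContinuousWithinAt T^[i] (Ico c d) α := fun i hi =>
    continuousWithinAt_iterate hT.bijOn.mapsTo fun j hj => hcont j (by omega)
  have hbefore : ∀ᶠ y in 𝓝[Ico a b] α, ∀ i ∈ Finset.Ico 1 h, T^[i] y ∉ Ico a b := by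
    refine (Filter.eventually_all_finset _).2 fun i hi => ?_
    obtain ⟨hi1, hih⟩ := Finset.mem_Ico.1 hi
    exact eventually_notMem_Ico hsub hα (hiter i hih.le) (iterate_notMem_of_lt_retTime hi1 hih)
      (hT.eventually_iterate_nhdsGE (hsub hα) i) (hb i hi1 hih)
  have hreturn : ∀ᶠ y in 𝓝[Ico a b] α, T^[h] y ∈ Ico a b :=
    ((hiter h le_rfl).mono hsub).tendsto.eventually_mem
      (mem_of_superset (Ioo_mem_nhds (hret.1.lt_of_ne' ha) hret.2) Ioo_subset_Ico_self)
  refine ((hiter h le_rfl).mono hsub).congr_of_eventuallyEq ?_ rfl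
  filter_upwards [hbefore, hreturn] with y hy hyh
  rw [retMap, retTime_eq h1 hyh fun i hi hih => hy i (Finset.mem_Ico.2 ⟨hi, hih⟩)]

end IsIETOn

theorem discontinuity_of_induced_map_general (T : ℝ → ℝ) (hT : IsIET T)
    (a b : ℝ) (hsub : Set.Ico a b ⊆ Set.Ico (0 : ℝ) 1)
    (α : ℝ) (hα : α ∈ Discont (retMap T (Set.Ico a b)) a b) :
    (∀ i : ℕ, 1 ≤ i → i < retTime T (Set.Ico a b) α → T^[i] α ∉ Set.Ico a b) ∧
    T^[retTime T (Set.Ico a b) α] α = retMap T (Set.Ico a b) α ∧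
    ((∃ i < retTime T (Set.Ico a b) α, T^[i] α ∈ Discont T 0 1) ∨
      T^[retTime T (Set.Ico a b) α] α = a ∨
      (∃ i : ℕ, 1 ≤ i ∧ i < retTime T (Set.Ico a b) α ∧
        Filter.Tendsto (fun x => T^[i] x) (nhdsWithin α (Set.Iio α)) (nhds b))) := by
  refine ⟨fun i hi hlt => iterate_notMem_of_lt_retTime hi hlt, rfl, ?_⟩
  by_contra! hc
  obtain ⟨hdiscont, ha, hb⟩ := hc
  have hT' : IsIETOn T 0 1 := hT
  refine hα.2 (hT'.continuousWithinAt_retMap hsub hα.1 (fun i hi => ?_) ha hb)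
  by_contra hi_discont
  exact hdiscont i hi ⟨hT'.bijOn.mapsTo.iterate i (hsub hα.1), hi_discont⟩

/-- If `α ∈ Δ = [a,b)` is a discontinuity of the induced map `T_Δ`, then, with
`h = h_{Δ,T}(α)`: (a) `T^i α ∉ [a,b)` for `1 ≤ i < h`; (b) `T^h α = T_Δ α`; and
(c) either some `T^i α` (`0 ≤ i < h`) is a discontinuity of `T`, or `T^h α = a`,
or for some `1 ≤ i < h` one has `lim_{x → α⁻} T^i x = b`. -/
theorem discontinuity_of_induced_map (N : ℕ) (hN : 1 < N) (T : ℝ → ℝ) (hT : IsIET T)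
    (hfin : (Discont T 0 1).Finite) (hcard : (Discont T 0 1).ncard = N - 1)
    (a b : ℝ) (hsub : Set.Ico a b ⊆ Set.Ico (0 : ℝ) 1)
    (α : ℝ) (hα : α ∈ Discont (retMap T (Set.Ico a b)) a b) :
    (∀ i : ℕ, 1 ≤ i → i < retTime T (Set.Ico a b) α → T^[i] α ∉ Set.Ico a b) ∧
    T^[retTime T (Set.Ico a b) α] α = retMap T (Set.Ico a b) α ∧
    ((∃ i < retTime T (Set.Ico a b) α, T^[i] α ∈ Discont T 0 1) ∨
      T^[retTime T (Set.Ico a b) α] α = a ∨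
      (∃ i : ℕ, 1 ≤ i ∧ i < retTime T (Set.Ico a b) α ∧
        Filter.Tendsto (fun x => T^[i] x) (nhdsWithin α (Set.Iio α)) (nhds b))) :=
  discontinuity_of_induced_map_general T hT a b hsub α hα
end

section
/- Let T : [0,1) → [0,1) be a right-continuous interval exchange transformation with at least one discontinuity, and let 0 < d_1 < ⋯ < d_{N−1} < 1 be the list of its discontinuities. Then T is aperiodic (i.e. T^n x ≠ x for every x ∈ [0,1) and every n ≥ 1) if and only if the set ⋃_{j=1}^{N−1} {T^n d_j : n ≥ 1} is dense in [0,1). -/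
/-- The forward orbit `{T^n x | n ≥ 1}` of a point `x`. -/
def fwdOrbit (T : ℝ → ℝ) (x : ℝ) : Set ℝ :=
  {y | ∃ n : ℕ, 1 ≤ n ∧ T^[n] x = y}

lemma IsIET.bijOn {T : ℝ → ℝ} (hT : IsIET T) :
    Set.BijOn T (Set.Ico 0 1) (Set.Ico 0 1) := by
  obtain ⟨N, p, σ, _, _, _, _, _, h⟩ := hT; exact h

lemma eq_add_of_left_const {T : ℝ → ℝ} {w x' C : ℝ}
    (hc : ContinuousWithinAt T (Set.Ico (0:ℝ) 1) w) (hw : w ∈ Set.Ico (0:ℝ) 1)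
    (hx0 : 0 ≤ x') (hlt : x' < w)
    (hconst : ∀ y ∈ Set.Ico x' w, T y = y + C) : T w = w + C := by
  have hsub : Set.Ico x' w ⊆ Set.Ico (0:ℝ) 1 :=
    fun y hy => ⟨le_trans hx0 hy.1, lt_trans hy.2 hw.2⟩
  have hne : (nhdsWithin w (Set.Ico x' w)).NeBot := by
    rw [← mem_closure_iff_nhdsWithin_neBot, closure_Ico hlt.ne]
    exact ⟨hlt.le, le_rfl⟩
  have h1 : Filter.Tendsto T (nhdsWithin w (Set.Ico x' w)) (nhds (T w)) :=
    hc.mono hsub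
  have h2 : Filter.Tendsto (fun y => y + C) (nhdsWithin w (Set.Ico x' w)) (nhds (w + C)) :=
    ((continuous_id.add continuous_const).continuousWithinAt)
  have h3 : Filter.Tendsto T (nhdsWithin w (Set.Ico x' w)) (nhds (w + C)) := by
    refine h2.congr' ?_
    exact Filter.eventuallyEq_of_mem self_mem_nhdsWithin fun y hy => (hconst y hy).symm
  exact tendsto_nhds_unique h1 h3

lemma pmono_aux {N : ℕ} {p : ℕ → ℝ} (hmono : ∀ i < N, p i < p (i + 1)) :
    ∀ i ≤ N, ∀ j < i, p j < p i := by
  intro i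
  induction i with
  | zero => intro _ j hj; omega
  | succ i ih =>
    intro hi j hj
    rcases Nat.lt_or_ge j i with h | h
    · exact lt_trans (ih (by omega) j h) (hmono i (by omega))
    · have : j = i := by omega
      subst this; exact hmono j (by omega)

lemma exists_piece_index {N : ℕ} {p : ℕ → ℝ} (hN : 1 ≤ N) (h0 : p 0 = 0) (h1 : p N = 1)
    {x : ℝ} (hx : x ∈ Set.Ico (0:ℝ) 1) :
    ∃ i < N, p i ≤ x ∧ x < p (i + 1) := by
  classical
  set s : Finset ℕ := (Finset.range N).filter (fun i => p i ≤ x) with hs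
  have h0s : 0 ∈ s := by
    simp [hs, Finset.mem_filter, h0, hx.1, Finset.mem_range]
    omega
  have hsne : s.Nonempty := ⟨0, h0s⟩
  set i := s.max' hsne with hi
  have his : i ∈ s := s.max'_mem hsne
  have hiN : i < N := (Finset.mem_filter.mp his).1 |> Finset.mem_range.mp
  have hpi : p i ≤ x := (Finset.mem_filter.mp his).2
  refine ⟨i, hiN, hpi, ?_⟩
  rcases eq_or_lt_of_le (Nat.succ_le_of_lt hiN) with h | h
  · rw [show i + 1 = N from h, h1]; exact hx.2
  · by_contra hcon
    push_neg at hcon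
    have : i + 1 ∈ s := by
      simp [hs, Finset.mem_filter, Finset.mem_range]
      exact ⟨h, hcon⟩
    have := s.le_max' _ this
    omega

lemma translation_on_no_discont {T : ℝ → ℝ} (hT : IsIET T) {u v : ℝ}
    (hu : 0 ≤ u) (hv : v ≤ 1) (huv : u < v)
    (hD : ∀ t ∈ Set.Ioo u v, t ∉ Discont T 0 1) :
    ∀ x ∈ Set.Ico u v, T x = x + (T u - u) := by
  obtain ⟨N, p, σ, hN, hp0, hpN, hmono, hpiece, hbij⟩ := hT
  have main : ∀ i, i < N → ∀ x, p i ≤ x → x < p (i+1) → u ≤ x → x < v →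
      T x = x + (T u - u) := by
    intro i
    induction i using Nat.strong_induction_on with
    | _ i IH =>
      intro hiN x hpix hxpi hux hxv
      rcases le_or_gt (p i) u with hpu | hup
      · have hu' : u ∈ Set.Ico (p i) (p (i+1)) := ⟨hpu, lt_of_le_of_lt hux hxpi⟩
        have h1 := hpiece i hiN u hu'
        have h2 := hpiece i hiN x ⟨hpix, hxpi⟩
        rw [h2, h1]; ring
      · have hi0 : i ≠ 0 := by
          intro h; subst h; rw [hp0] at hup; linarith
        obtain ⟨j, rfl⟩ := Nat.exists_eq_succ_of_ne_zero hi0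
        set x' := max u (p j) with hx'
        have hpjx' : p j ≤ x' := le_max_right _ _
        have hux' : u ≤ x' := le_max_left _ _
        have hx'pj1 : x' < p (j+1) := max_lt hup (hmono j (by omega))
        have hx'v : x' < v := lt_trans (lt_of_lt_of_le hx'pj1 hpix) hxv
        have hTx' : T x' = x' + (T u - u) :=
          IH j (by omega) (by omega) x' hpjx' hx'pj1 hux' hx'v
        have hσj : σ j = T u - u := by
          have := hpiece j (by omega) x' ⟨hpjx', hx'pj1⟩
          rw [this] at hTx'; linarith
        have hconst : ∀ y ∈ Set.Ico x' (p (j+1)), T y = y + (T u - u) := by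
          intro y hy
          have := hpiece j (by omega) y ⟨le_trans hpjx' hy.1, hy.2⟩
          rw [this, hσj]
        have hpj1Ico : p (j+1) ∈ Set.Ico (0:ℝ) 1 :=
          ⟨le_trans hu (le_of_lt hup), lt_of_le_of_lt hpix (lt_of_lt_of_le hxv hv)⟩
        have hpj1cont : ContinuousWithinAt T (Set.Ico 0 1) (p (j+1)) := by
          have hnd := hD (p (j+1)) ⟨hup, lt_of_le_of_lt hpix hxv⟩
          by_contra hcon
          exact hnd ⟨hpj1Ico, hcon⟩
        have hTpj1 : T (p (j+1)) = p (j+1) + (T u - u) :=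
          eq_add_of_left_const hpj1cont hpj1Ico (le_trans hu hux') hx'pj1 hconst
        have h2 := hpiece (j+1) hiN x ⟨hpix, hxpi⟩
        have h3 := hpiece (j+1) hiN (p (j+1)) ⟨le_rfl, hmono (j+1) hiN⟩
        rw [h3] at hTpj1
        rw [h2]; linarith
  intro x hx
  have hxI : x ∈ Set.Ico (0:ℝ) 1 := ⟨le_trans hu hx.1, lt_of_lt_of_le hx.2 hv⟩
  obtain ⟨i, hiN, h1, h2⟩ := exists_piece_index hN hp0 hpN hxI
  exact main i hiN x h1 h2 hx.1 hx.2

lemma exists_maximal_piece {T : ℝ → ℝ} (hT : IsIET T)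
    (hfin : (Discont T 0 1).Finite) {y : ℝ} (hy : y ∈ Set.Ico (0:ℝ) 1) :
    ∃ L R, 0 ≤ L ∧ L ≤ y ∧ y < R ∧ R ≤ 1 ∧
      (L = 0 ∨ L ∈ Discont T 0 1) ∧ (R = 1 ∨ R ∈ Discont T 0 1) ∧
      ∀ t ∈ Set.Ico L R, T t = t + (T L - L) := by
  classical
  set F : Finset ℝ := insert 0 (insert 1 hfin.toFinset) with hF
  have hDmem : ∀ t ∈ Discont T 0 1, t ∈ F := by
    intro t ht; simp [hF, Set.Finite.mem_toFinset]; tauto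
  have hDIco : ∀ t ∈ Discont T 0 1, t ∈ Set.Ico (0:ℝ) 1 := fun t ht => ht.1
  set sL : Finset ℝ := F.filter (fun t => t ≤ y) with hsL
  have h0sL : (0:ℝ) ∈ sL := by
    simp [hsL, hF]; exact hy.1
  have hsLne : sL.Nonempty := ⟨0, h0sL⟩
  set L := sL.max' hsLne with hLdef
  have hLmem : L ∈ sL := sL.max'_mem hsLne
  have hLy : L ≤ y := (Finset.mem_filter.mp hLmem).2
  have hL0 : 0 ≤ L := sL.le_max' 0 h0sL
  set sR : Finset ℝ := F.filter (fun t => y < t) with hsR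
  have h1sR : (1:ℝ) ∈ sR := by
    simp [hsR, hF]; exact hy.2
  have hsRne : sR.Nonempty := ⟨1, h1sR⟩
  set R := sR.min' hsRne with hRdef
  have hRmem : R ∈ sR := sR.min'_mem hsRne
  have hyR : y < R := (Finset.mem_filter.mp hRmem).2
  have hR1 : R ≤ 1 := sR.min'_le 1 h1sR
  have hLclass : L = 0 ∨ L ∈ Discont T 0 1 := by
    have := (Finset.mem_filter.mp hLmem).1
    rw [hF] at this
    rcases Finset.mem_insert.mp this with h | h
    · exact Or.inl h
    rcases Finset.mem_insert.mp h with h | h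
    · exfalso; rw [h] at hLy; linarith [hy.2]
    · exact Or.inr (hfin.mem_toFinset.mp h)
  have hRclass : R = 1 ∨ R ∈ Discont T 0 1 := by
    have := (Finset.mem_filter.mp hRmem).1
    rw [hF] at this
    rcases Finset.mem_insert.mp this with h | h
    · exfalso; rw [h] at hyR; linarith [hy.1]
    rcases Finset.mem_insert.mp h with h | h
    · exact Or.inl h
    · exact Or.inr (hfin.mem_toFinset.mp h)
  have havoid : ∀ t ∈ Set.Ioo L R, t ∉ Discont T 0 1 := by
    intro t ht htD
    have htF := hDmem t htD
    rcases le_or_gt t y with h | h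
    · have : t ∈ sL := Finset.mem_filter.mpr ⟨htF, h⟩
      exact absurd (sL.le_max' t this) (not_le.mpr ht.1)
    · have : t ∈ sR := Finset.mem_filter.mpr ⟨htF, h⟩
      exact absurd (sR.min'_le t this) (not_le.mpr ht.2)
  exact ⟨L, R, hL0, hLy, hyR, hR1, hLclass, hRclass,
    translation_on_no_discont hT hL0 hR1 (lt_of_le_of_lt hLy hyR) havoid⟩

lemma exists_discont_map_zero {T : ℝ → ℝ} (hT : IsIET T)
    (hfin : (Discont T 0 1).Finite) (h0 : T 0 ≠ 0) :
    ∃ t ∈ Discont T 0 1, T t = 0 := by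
  have h01 : (0:ℝ) ∈ Set.Ico (0:ℝ) 1 := ⟨le_rfl, one_pos⟩
  obtain ⟨y, hy, hTy⟩ := hT.bijOn.surjOn h01
  obtain ⟨L, R, hL0, hLy, hyR, hR1, hLclass, _, htr⟩ := exists_maximal_piece hT hfin hy
  have hTyeq := htr y ⟨hLy, hyR⟩
  have hc : T L - L = -y := by rw [hTy] at hTyeq; linarith
  have hTL : T L ∈ Set.Ico (0:ℝ) 1 :=
    hT.bijOn.mapsTo ⟨hL0, lt_of_le_of_lt hLy hy.2⟩
  have hLy' : L = y := le_antisymm hLy (by have := hTL.1; linarith [hc])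
  rcases hLclass with h | h
  · exfalso
    have heq : T 0 = 0 := by
      have := hTy
      rw [← hLy', h] at this
      exact this
    exact h0 heq
  · exact ⟨L, h, by rw [hLy', hTy]⟩

lemma preimage_interval {T : ℝ → ℝ} (hT : IsIET T) (hfin : (Discont T 0 1).Finite)
    {E : Set ℝ} (hTd : ∀ t ∈ Discont T 0 1, T t ∈ E) (hT0 : T 0 ∈ E)
    {α β : ℝ} (hα : 0 ≤ α) (hβ : β ≤ 1) (hαβ : α < β)
    (hE : ∀ t ∈ Set.Ioo α β, t ∉ E) :
    ∃ c, 0 ≤ α - c ∧ β - c ≤ 1 ∧ ∀ t ∈ Set.Ioo (α - c) (β - c), T t = t + c := by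
  have hsurj := hT.bijOn.surjOn
  have hinj := hT.bijOn.injOn
  have branch : ∀ u ∈ Set.Ioo α β, ∃ y, y ∈ Set.Ico (0:ℝ) 1 ∧ T y = u ∧
      ∀ u' ∈ Set.Ico u β, (u' - (u - y) ∈ Set.Ico (0:ℝ) 1 ∧ T (u' - (u - y)) = u') := by
    intro u hu
    have huI : u ∈ Set.Ico (0:ℝ) 1 := ⟨le_trans hα hu.1.le, lt_of_lt_of_le hu.2 hβ⟩
    obtain ⟨y, hy, hTy⟩ := hsurj huI
    obtain ⟨L, R, hL0, hLy, hyR, hR1, hLcl, hRcl, htr⟩ := exists_maximal_piece hT hfin hy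
    have hcy : T L - L = u - y := by have := htr y ⟨hLy, hyR⟩; rw [hTy] at this; linarith
    have hkey : β ≤ R + (u - y) := by
      by_contra hcon
      push_neg at hcon
      set w := R + (u - y) with hw
      have hwα : α < w := by have : y + (u - y) = u := by ring
                             nlinarith [hyR, hu.1]
      have hwIoo : w ∈ Set.Ioo α β := ⟨hwα, hcon⟩
      have hwI : w ∈ Set.Ico (0:ℝ) 1 := ⟨le_trans hα hwα.le, lt_of_lt_of_le hcon hβ⟩
      obtain ⟨z, hz, hTz⟩ := hsurj hwI
      obtain ⟨L', R', hL'0, hL'z, hzR', hR'1, hL'cl, _, htr'⟩ :=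
        exists_maximal_piece hT hfin hz
      have hcz : T L' - L' = w - z := by
        have := htr' z ⟨hL'z, hzR'⟩; rw [hTz] at this; linarith
      rcases lt_or_eq_of_le hL'z with hzL | hzL
      · -- z interior of its piece: contradiction via injectivity
        set ε := min (z - L') (R - L) with hε
        have hLR : L < R := lt_of_le_of_lt hLy hyR
        have hε0 : 0 < ε := lt_min (by linarith) (by linarith)
        have ht1mem : R - ε ∈ Set.Ico L R :=
          ⟨by have := min_le_right (z - L') (R - L); linarith, by linarith⟩
        have ht2mem : z - ε ∈ Set.Ico L' R' :=
          ⟨by have := min_le_left (z - L') (R - L); linarith, by linarith⟩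
        have hT1 : T (R - ε) = w - ε := by rw [htr _ ht1mem, hcy]; ring
        have hT2 : T (z - ε) = w - ε := by rw [htr' _ ht2mem, hcz]; ring
        have ht1I : R - ε ∈ Set.Ico (0:ℝ) 1 :=
          ⟨le_trans hL0 ht1mem.1, lt_of_lt_of_le ht1mem.2 hR1⟩
        have ht2I : z - ε ∈ Set.Ico (0:ℝ) 1 :=
          ⟨le_trans hL'0 ht2mem.1, lt_trans (by linarith) hz.2⟩
        have heq : R - ε = z - ε := hinj ht1I ht2I (by rw [hT1, hT2])
        have hzR : z = R := by linarith
        rcases hRcl with h | h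
        · rw [hzR, h] at hz; exact absurd hz.2 (lt_irrefl 1)
        · have : w ∈ E := by rw [← hTz, hzR]; exact hTd R h
          exact hE w hwIoo this
      · -- z = L' : boundary point, w = T z ∈ E
        rcases hL'cl with h | h
        · have : w ∈ E := by rw [← hTz, ← hzL, h]; exact hT0
          exact hE w hwIoo this
        · have : w ∈ E := by rw [← hTz, ← hzL]; exact hTd L' h
          exact hE w hwIoo this
    refine ⟨y, hy, hTy, ?_⟩
    intro u' hu'
    have hmem : u' - (u - y) ∈ Set.Ico L R :=
      ⟨by linarith [hu'.1], by linarith [hu'.2]⟩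
    refine ⟨⟨le_trans hL0 hmem.1, lt_of_lt_of_le hmem.2 hR1⟩, ?_⟩
    rw [htr _ hmem, hcy]; ring
  -- uniform constant
  set u0 := (α + β)/2 with hu0
  have hu0m : u0 ∈ Set.Ioo α β := ⟨by simp [hu0]; linarith, by simp [hu0]; linarith⟩
  obtain ⟨y0, hy0, hTy0, hcov0⟩ := branch u0 hu0m
  set c := u0 - y0 with hc
  have hall : ∀ u ∈ Set.Ioo α β, u - c ∈ Set.Ico (0:ℝ) 1 ∧ T (u - c) = u := by
    intro u hu
    rcases le_or_gt u0 u with h | h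
    · exact hcov0 u ⟨h, hu.2⟩
    · obtain ⟨y, hy, hTy, hcov⟩ := branch u hu
      have h1 := hcov u0 ⟨h.le, hu0m.2⟩
      have h2 := hcov0 u0 ⟨le_rfl, hu0m.2⟩
      have : u0 - (u - y) = u0 - c := hinj h1.1 h2.1 (by rw [h1.2, h2.2])
      have hcy : u - y = c := by linarith
      have h3 := hcov u ⟨le_rfl, hu.2⟩
      rw [hcy] at h3
      exact h3
  have h0αc : 0 ≤ α - c := by
    by_contra hcon
    push_neg at hcon
    have hmin : α < min β c := lt_min hαβ (by linarith)
    have hminβ : min β c ≤ β := min_le_left _ _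
    have hminc : min β c ≤ c := min_le_right _ _
    have hum : (α + min β c)/2 ∈ Set.Ioo α β :=
      Set.mem_Ioo.mpr ⟨by linarith, by linarith⟩
    have := (hall _ hum).1.1
    linarith
  have hβc : β - c ≤ 1 := by
    by_contra hcon
    push_neg at hcon
    have hmax : max α (1 + c) < β := max_lt hαβ (by linarith)
    have hmaxα : α ≤ max α (1 + c) := le_max_left _ _
    have hmaxc : 1 + c ≤ max α (1 + c) := le_max_right _ _
    have hum : (max α (1 + c) + β)/2 ∈ Set.Ioo α β :=
      Set.mem_Ioo.mpr ⟨by linarith, by linarith⟩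
    have := (hall _ hum).1.2
    linarith
  refine ⟨c, h0αc, hβc, ?_⟩
  intro t ht
  have := hall (t + c) ⟨by linarith [ht.1], by linarith [ht.2]⟩
  have h := this.2
  rw [show t + c - c = t by ring] at h
  rw [h]

lemma dense_of_aperiodic {T : ℝ → ℝ} (hT : IsIET T) (hfin : (Discont T 0 1).Finite)
    {E : Set ℝ} (hTd : ∀ t ∈ Discont T 0 1, T t ∈ E) (hT0 : T 0 ∈ E)
    (hTE : ∀ e ∈ E, T e ∈ E)
    (hap : ∀ x ∈ Set.Ico (0:ℝ) 1, ∀ n : ℕ, 1 ≤ n → T^[n] x ≠ x) :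
    Set.Ico (0:ℝ) 1 ⊆ closure E := by
  classical
  by_contra hnd
  have hIoo : ¬ (Set.Ioo (0:ℝ) 1 ⊆ closure E) := by
    intro h
    apply hnd
    intro t ht
    have h1 : closure (Set.Ioo (0:ℝ) 1) ⊆ closure E := closure_minimal h isClosed_closure
    have h2 : t ∈ closure (Set.Ioo (0:ℝ) 1) := by
      rw [closure_Ioo (by norm_num : (0:ℝ) ≠ 1)]
      exact ⟨ht.1, ht.2.le⟩
    exact h1 h2
  obtain ⟨x₀, hx₀, hx₀E⟩ := Set.not_subset.mp hIoo
  set A : Set ℝ := (closure E ∩ Set.Icc 0 1) ∪ {0, 1} with hA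
  have hAclosed : IsClosed A := by
    apply IsClosed.union (isClosed_closure.inter isClosed_Icc)
    exact (Set.finite_singleton (1:ℝ)).insert 0 |>.isClosed
  have h0A : (0:ℝ) ∈ A := Or.inr (by simp)
  have h1A : (1:ℝ) ∈ A := Or.inr (by simp)
  set a : ℝ → ℝ := fun x => sSup (A ∩ Set.Iic x) with ha
  set b : ℝ → ℝ := fun x => sInf (A ∩ Set.Ici x) with hb
  -- basic properties for good points
  have haprop : ∀ x, x ∈ Set.Ioo (0:ℝ) 1 → x ∉ closure E →
      a x ∈ A ∧ 0 ≤ a x ∧ a x < x := by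
    intro x hx hxE
    have h0S : (0:ℝ) ∈ A ∩ Set.Iic x := ⟨h0A, hx.1.le⟩
    have hSne : (A ∩ Set.Iic x).Nonempty := ⟨0, h0S⟩
    have hSbdd : BddAbove (A ∩ Set.Iic x) := ⟨x, fun t ht => ht.2⟩
    have hmem : a x ∈ A ∩ Set.Iic x :=
      (hAclosed.inter isClosed_Iic).csSup_mem hSne hSbdd
    have hax : a x ≤ x := hmem.2
    have hne : a x ≠ x := by
      intro h
      rcases hmem.1 with hc | hc
      · exact hxE (h ▸ hc.1)
      · rcases hc with hc | hc
        · rw [h] at hc; rw [hc] at hx; exact absurd hx.1 (lt_irrefl 0)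
        · simp at hc; rw [h] at hc; rw [hc] at hx; exact absurd hx.2 (lt_irrefl 1)
    exact ⟨hmem.1, le_csSup hSbdd h0S, lt_of_le_of_ne hax hne⟩
  have hbprop : ∀ x, x ∈ Set.Ioo (0:ℝ) 1 → x ∉ closure E →
      b x ∈ A ∧ b x ≤ 1 ∧ x < b x := by
    intro x hx hxE
    have h1S : (1:ℝ) ∈ A ∩ Set.Ici x := ⟨h1A, hx.2.le⟩
    have hSne : (A ∩ Set.Ici x).Nonempty := ⟨1, h1S⟩
    have hSbdd : BddBelow (A ∩ Set.Ici x) := ⟨x, fun t ht => ht.2⟩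
    have hmem : b x ∈ A ∩ Set.Ici x :=
      (hAclosed.inter isClosed_Ici).csInf_mem hSne hSbdd
    have hbx : x ≤ b x := hmem.2
    have hne : b x ≠ x := by
      intro h
      rcases hmem.1 with hc | hc
      · exact hxE (h ▸ hc.1)
      · rcases hc with hc | hc
        · rw [h] at hc; rw [hc] at hx; exact absurd hx.1 (lt_irrefl 0)
        · simp at hc; rw [h] at hc; rw [hc] at hx; exact absurd hx.2 (lt_irrefl 1)
    exact ⟨hmem.1, csInf_le hSbdd h1S, lt_of_le_of_ne hbx (Ne.symm hne)⟩
  have havoid : ∀ x, x ∈ Set.Ioo (0:ℝ) 1 → x ∉ closure E →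
      ∀ t ∈ Set.Ioo (a x) (b x), t ∉ closure E := by
    intro x hx hxE t ht htE
    have hap' := haprop x hx hxE
    have hbp' := hbprop x hx hxE
    have htA : t ∈ A := Or.inl ⟨htE,
      ⟨le_trans hap'.2.1 ht.1.le, le_trans ht.2.le hbp'.2.1⟩⟩
    rcases le_or_gt t x with h | h
    · have : t ≤ a x := le_csSup ⟨x, fun s hs => hs.2⟩ ⟨htA, h⟩
      exact absurd ht.1 (not_lt.mpr this)
    · have : b x ≤ t := csInf_le ⟨x, fun s hs => hs.2⟩ ⟨htA, h.le⟩
      exact absurd ht.2 (not_lt.mpr this)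
  have hmaximal : ∀ x, x ∈ Set.Ioo (0:ℝ) 1 → x ∉ closure E →
      ∀ γ δ, 0 ≤ γ → δ ≤ 1 → γ < x → x < δ →
      (∀ t ∈ Set.Ioo γ δ, t ∉ closure E) → a x ≤ γ ∧ δ ≤ b x := by
    intro x hx hxE γ δ hγ0 hδ1 hγx hxδ hγδ
    have hap' := haprop x hx hxE
    have hbp' := hbprop x hx hxE
    constructor
    · by_contra hcon
      push_neg at hcon
      have hmem : a x ∈ Set.Ioo γ δ := ⟨hcon, lt_trans hap'.2.2 hxδ⟩
      rcases hap'.1 with hc | hc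
      · exact hγδ _ hmem hc.1
      · rcases hc with hc | hc
        · rw [hc] at hcon; linarith
        · simp at hc; rw [hc] at hap'; linarith [hap'.2.2, hx.2]
    · by_contra hcon
      push_neg at hcon
      have hmem : b x ∈ Set.Ioo γ δ := ⟨lt_of_le_of_lt hγx.le hbp'.2.2, hcon⟩
      rcases hbp'.1 with hc | hc
      · exact hγδ _ hmem hc.1
      · rcases hc with hc | hc
        · rw [hc] at hbp'; linarith [hbp'.2.2, hx.1]
        · simp at hc; rw [hc] at hcon; linarith
  -- the step
  have hstep : ∀ x, x ∈ Set.Ioo (0:ℝ) 1 → x ∉ closure E →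
      ∃ c, ((x - c) ∈ Set.Ioo (0:ℝ) 1 ∧ (x - c) ∉ closure E) ∧ T (x - c) = x ∧
        a (x - c) ≤ a x - c ∧ b x - c ≤ b (x - c) ∧
        (∀ t ∈ Set.Ioo (a x - c) (b x - c), T t = t + c) := by
    intro x hx hxE
    have hap' := haprop x hx hxE
    have hbp' := hbprop x hx hxE
    have hab : a x < b x := lt_trans hap'.2.2 hbp'.2.2
    obtain ⟨c, hc0, hc1, htr⟩ := preimage_interval hT hfin hTd hT0 hap'.2.1 hbp'.2.1 hab
      (fun t ht htE => havoid x hx hxE t ht (subset_closure htE))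
    have hpreavoid : ∀ t ∈ Set.Ioo (a x - c) (b x - c), t ∉ closure E := by
      intro t ht htcl
      obtain ⟨e, heO, heE⟩ := mem_closure_iff.mp htcl _ isOpen_Ioo ht
      have hTe : T e = e + c := htr e heO
      have : T e ∈ Set.Ioo (a x) (b x) := by
        rw [hTe]; exact ⟨by linarith [heO.1], by linarith [heO.2]⟩
      exact havoid x hx hxE _ this (subset_closure (hTE e heE))
    have hxmem : x - c ∈ Set.Ioo (a x - c) (b x - c) :=
      ⟨by linarith [hap'.2.2], by linarith [hbp'.2.2]⟩
    have hgood : (x - c) ∈ Set.Ioo (0:ℝ) 1 :=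
      ⟨lt_of_le_of_lt hc0 hxmem.1, lt_of_lt_of_le hxmem.2 hc1⟩
    have hgoodE : (x - c) ∉ closure E := hpreavoid _ hxmem
    have hTxc : T (x - c) = x := by rw [htr _ hxmem]; ring
    have hmax := hmaximal (x - c) hgood hgoodE (a x - c) (b x - c) hc0 hc1
      hxmem.1 hxmem.2 hpreavoid
    exact ⟨c, ⟨hgood, hgoodE⟩, hTxc, hmax.1, hmax.2, htr⟩
  -- build the sequence
  set G := {z : ℝ // z ∈ Set.Ioo (0:ℝ) 1 ∧ z ∉ closure E} with hG
  choose cf hcf using hstep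
  set F : G → G := fun z => ⟨z.1 - cf z.1 z.2.1 z.2.2, (hcf z.1 z.2.1 z.2.2).1⟩ with hF
  set X : ℕ → G := fun m => F^[m] ⟨x₀, hx₀, hx₀E⟩ with hX
  have hXsucc : ∀ m, X (m+1) = F (X m) := by
    intro m; rw [hX]; simp [Function.iterate_succ_apply']
  have key : ∀ m, ∃ cm : ℝ, (X (m+1)).1 = (X m).1 - cm ∧ T (X (m+1)).1 = (X m).1 ∧
      a (X (m+1)).1 ≤ a (X m).1 - cm ∧ b (X m).1 - cm ≤ b (X (m+1)).1 ∧
      (∀ t ∈ Set.Ioo (a (X m).1 - cm) (b (X m).1 - cm), T t = t + cm) := by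
    intro m
    have h := hcf (X m).1 (X m).2.1 (X m).2.2
    refine ⟨cf (X m).1 (X m).2.1 (X m).2.2, ?_, ?_, ?_, ?_, h.2.2.2.2⟩
    · rw [hXsucc m]
    · rw [hXsucc m]; exact h.2.1
    · rw [hXsucc m]; exact h.2.2.1
    · rw [hXsucc m]; exact h.2.2.2.1
  choose cs hXs hTX hAs hBs htrs using key
  set L : ℕ → ℝ := fun m => b (X m).1 - a (X m).1 with hL
  have hLmono : ∀ m, L m ≤ L (m+1) := by
    intro m
    have h1 := hAs m; have h2 := hBs m
    show b (X m).1 - a (X m).1 ≤ b (X (m+1)).1 - a (X (m+1)).1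
    linarith
  have hLmono' : ∀ m j, L m ≤ L (m + j) := by
    intro m j
    induction j with
    | zero => exact le_refl _
    | succ j ih => exact le_trans ih (hLmono (m+j))
  have hLle : ∀ m k, m ≤ k → L m ≤ L k := by
    intro m k h
    have := hLmono' m (k - m)
    rwa [Nat.add_sub_cancel' h] at this
  have hL0pos : 0 < L 0 := by
    have h1 := haprop x₀ hx₀ hx₀E
    have h2 := hbprop x₀ hx₀ hx₀E
    have hx0 : (X 0).1 = x₀ := rfl
    show (0:ℝ) < b (X 0).1 - a (X 0).1
    rw [hx0]
    linarith [h1.2.2, h2.2.2]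
  have haIco : ∀ m, 0 ≤ a (X m).1 ∧ a (X m).1 < 1 := by
    intro m
    have h1 := haprop (X m).1 (X m).2.1 (X m).2.2
    exact ⟨h1.2.1, lt_trans h1.2.2 (X m).2.1.2⟩
  -- lengths and pigeonhole
  have hLdef : ∀ z, L z = b (X z).1 - a (X z).1 := fun z => rfl
  have hLge : ∀ m, L 0 ≤ L m := fun m => hLle 0 m (Nat.zero_le m)
  have hcompeq : ∀ m k : ℕ, a (X m).1 ≤ a (X k).1 → a (X k).1 - a (X m).1 < L 0 →
      a (X m).1 = a (X k).1 ∧ b (X m).1 = b (X k).1 := by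
    intro m k hmk hclose
    have hm := (X m).2; have hk := (X k).2
    have hapm := haprop _ hm.1 hm.2
    have hbpm := hbprop _ hm.1 hm.2
    have hapk := haprop _ hk.1 hk.2
    have hbpk := hbprop _ hk.1 hk.2
    have hLm : L 0 ≤ L m := hLge m
    have hLk : L 0 ≤ L k := hLge k
    rw [hLdef m] at hLm
    rw [hLdef k] at hLk
    have hδ1 : max (b (X m).1) (b (X k).1) ≤ 1 := max_le hbpm.2.1 hbpk.2.1
    have havoidU : ∀ t ∈ Set.Ioo (a (X m).1) (max (b (X m).1) (b (X k).1)),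
        t ∉ closure E := by
      intro t ht
      rcases lt_or_ge t (b (X m).1) with h | h
      · exact havoid _ hm.1 hm.2 t ⟨ht.1, h⟩
      · have htk : t < b (X k).1 := by
          by_contra hcon
          push_neg at hcon
          have : max (b (X m).1) (b (X k).1) ≤ t := max_le h hcon
          linarith [ht.2]
        have hta : a (X k).1 < t := by linarith
        exact havoid _ hk.1 hk.2 t ⟨hta, htk⟩
    have h1 := hmaximal _ hm.1 hm.2 (a (X m).1) (max (b (X m).1) (b (X k).1))
      hapm.2.1 hδ1 hapm.2.2 (lt_of_lt_of_le hbpm.2.2 (le_max_left _ _)) havoidU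
    have h2 := hmaximal _ hk.1 hk.2 (a (X m).1) (max (b (X m).1) (b (X k).1))
      hapm.2.1 hδ1 (lt_of_le_of_lt hmk hapk.2.2)
      (lt_of_lt_of_le hbpk.2.2 (le_max_right _ _)) havoidU
    refine ⟨le_antisymm hmk h2.1, le_antisymm ?_ ?_⟩
    · exact le_trans (le_max_left _ _) h2.2
    · exact le_trans (le_max_right _ _) h1.2
  -- final contradiction from a recurring component
  have final : ∀ m k : ℕ, m < k → a (X m).1 = a (X k).1 → b (X m).1 = b (X k).1 →
      False := by
    intro m k hmklt haeq hbeq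
    have hLmk : L m = L k := by rw [hLdef m, hLdef k, haeq, hbeq]
    have hLconstj : ∀ j, m ≤ j → j ≤ k → L j = L m := by
      intro j h1 h2
      have u1 := hLle m j h1
      have u2 := hLle j k h2
      linarith
    have hstepeq : ∀ j, m ≤ j → j < k →
        a (X (j+1)).1 = a (X j).1 - cs j ∧ b (X (j+1)).1 = b (X j).1 - cs j := by
      intro j h1 h2
      have e1 := hAs j; have e2 := hBs j
      have l1 : L j = L m := hLconstj j h1 h2.le
      have l2 : L (j+1) = L m := hLconstj (j+1) (by omega) (by omega)
      rw [hLdef j] at l1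
      rw [hLdef (j+1)] at l2
      constructor <;> linarith
    have htrans : ∀ i, i ≤ k - m → ∀ t ∈ Set.Ioo (a (X k).1) (b (X k).1),
        T^[i] t = t + (a (X (k - i)).1 - a (X k).1) := by
      intro i
      induction i with
      | zero =>
        intro _ t ht
        simp
      | succ i ih =>
        intro hik t ht
        have ihx := ih (by omega) t ht
        have hjm : m ≤ k - i - 1 := by omega
        have hjk : k - i - 1 < k := by omega
        have hj1 : k - i - 1 + 1 = k - i := by omega
        have hse := hstepeq (k - i - 1) hjm hjk
        rw [hj1] at hse
        have hLki : L (k - i) = L m := hLconstj _ (by omega) (by omega)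
        have hLkk : L k = L m := hLconstj _ (by omega) (by omega)
        rw [hLdef (k-i)] at hLki
        rw [hLdef k] at hLkk
        have hsmem : t + (a (X (k-i)).1 - a (X k).1) ∈
            Set.Ioo (a (X (k-i-1)).1 - cs (k-i-1)) (b (X (k-i-1)).1 - cs (k-i-1)) := by
          rw [← hse.1, ← hse.2]
          constructor
          · linarith [ht.1]
          · linarith [ht.2]
        have hTs := htrs (k-i-1) _ hsmem
        have hcs : cs (k-i-1) = a (X (k-i-1)).1 - a (X (k-i)).1 := by
          linarith [hse.1]
        have hki1 : k - (i+1) = k - i - 1 := by omega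
        rw [Function.iterate_succ_apply', ihx, hTs, hki1, hcs]
        ring
    have hxk := (X k).2
    have haxk := haprop _ hxk.1 hxk.2
    have hbxk := hbprop _ hxk.1 hxk.2
    have hfin' := htrans (k - m) le_rfl (X k).1 ⟨haxk.2.2, hbxk.2.2⟩
    have hkkm : k - (k - m) = m := by omega
    rw [hkkm] at hfin'
    have hper : T^[k - m] (X k).1 = (X k).1 := by rw [hfin', haeq]; ring
    exact hap (X k).1 ⟨hxk.1.1.le, hxk.1.2⟩ (k - m) (by omega) hper
  -- pigeonhole on floors
  obtain ⟨n, hn⟩ := exists_nat_gt (1 / L 0)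
  have hfloor : ∀ m : ℕ, ⌊a (X m).1 / L 0⌋.toNat ∈ Finset.range n := by
    intro m
    have h0 : 0 ≤ a (X m).1 / L 0 := div_nonneg (haIco m).1 hL0pos.le
    have h1 : a (X m).1 / L 0 < n := by
      have hlt : a (X m).1 / L 0 < 1 / L 0 :=
        (div_lt_div_iff_of_pos_right hL0pos).mpr (haIco m).2
      linarith
    have hfl : ⌊a (X m).1 / L 0⌋ < (n:ℤ) := Int.floor_lt.mpr (by exact_mod_cast h1)
    have hfl0 : 0 ≤ ⌊a (X m).1 / L 0⌋ := Int.floor_nonneg.mpr h0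
    rw [Finset.mem_range]
    omega
  obtain ⟨m, _, k, _, hmk, hfeq⟩ := Finset.exists_ne_map_eq_of_card_lt_of_maps_to
    (s := Finset.range (n+1)) (t := Finset.range n)
    (by simp) (fun m _ => hfloor m)
  have habs : ∀ m k : ℕ, ⌊a (X m).1 / L 0⌋.toNat = ⌊a (X k).1 / L 0⌋.toNat →
      a (X k).1 - a (X m).1 < L 0 := by
    intro m k hfe
    have h0m : (0:ℤ) ≤ ⌊a (X m).1 / L 0⌋ :=
      Int.floor_nonneg.mpr (div_nonneg (haIco m).1 hL0pos.le)
    have h0k : (0:ℤ) ≤ ⌊a (X k).1 / L 0⌋ :=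
      Int.floor_nonneg.mpr (div_nonneg (haIco k).1 hL0pos.le)
    have hfe' : ⌊a (X m).1 / L 0⌋ = ⌊a (X k).1 / L 0⌋ := by omega
    have h1 : a (X k).1 / L 0 < ⌊a (X m).1 / L 0⌋ + 1 := by
      rw [hfe']; exact Int.lt_floor_add_one _
    have h2 : (⌊a (X m).1 / L 0⌋ : ℝ) ≤ a (X m).1 / L 0 := Int.floor_le _
    have h3 : a (X k).1 / L 0 - a (X m).1 / L 0 < 1 := by linarith
    have h4 : (a (X k).1 / L 0 - a (X m).1 / L 0) * L 0 = a (X k).1 - a (X m).1 := by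
      field_simp
    have h5 := mul_lt_mul_of_pos_right h3 hL0pos
    rw [h4, one_mul] at h5
    exact h5
  rcases le_total (a (X m).1) (a (X k).1) with hord | hord
  · have heq := hcompeq m k hord (habs m k hfeq)
    rcases Nat.lt_or_ge m k with h | h
    · exact final m k h heq.1 heq.2
    · exact final k m (by omega) heq.1.symm heq.2.symm
  · have heq := hcompeq k m hord (habs k m hfeq.symm)
    rcases Nat.lt_or_ge m k with h | h
    · exact final m k h heq.1.symm heq.2.symm
    · exact final k m (by omega) heq.1 heq.2

lemma right_piece {T : ℝ → ℝ} (hT : IsIET T) {z : ℝ} (hz : z ∈ Set.Ico (0:ℝ) 1) :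
    ∃ q, z < q ∧ q ≤ 1 ∧ ∀ w ∈ Set.Ico z q, T w = w + (T z - z) := by
  obtain ⟨N, p, σ, hN, hp0, hpN, hmono, hpiece, hbij⟩ := hT
  obtain ⟨i, hiN, h1, h2⟩ := exists_piece_index hN hp0 hpN hz
  refine ⟨p (i+1), h2, ?_, ?_⟩
  · rcases Nat.lt_or_ge (i+1) N with h | h
    · exact (pmono_aux hmono N le_rfl (i+1) h).le.trans hpN.le
    · have : i + 1 = N := by omega
      rw [this, hpN]
  · intro w hw
    have hzm := hpiece i hiN z ⟨h1, h2⟩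
    have hwm := hpiece i hiN w ⟨le_trans h1 hw.1, hw.2⟩
    rw [hwm, hzm]; ring

lemma aperiodic_of_dense {M : ℕ} {T : ℝ → ℝ} (hT : IsIET T)
    (d : Fin M → ℝ)
    (hdense : Set.Ico (0:ℝ) 1 ⊆ closure (⋃ j : Fin M, fwdOrbit T (d j))) :
    ∀ x ∈ Set.Ico (0:ℝ) 1, ∀ n : ℕ, 1 ≤ n → T^[n] x ≠ x := by
  classical
  intro x hx n hn hfix
  have hmaps : Set.MapsTo T (Set.Ico (0:ℝ) 1) (Set.Ico (0:ℝ) 1) := hT.bijOn.mapsTo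
  -- local rigidity of iterates on the right of x
  have loc : ∀ j : ℕ, ∃ β, x < β ∧ β ≤ 1 ∧
      ∀ y ∈ Set.Ico x β, T^[j] y = y + (T^[j] x - x) := by
    intro j
    induction j with
    | zero => exact ⟨1, hx.2, le_rfl, fun y _ => by simp⟩
    | succ j ih =>
      obtain ⟨β, hxβ, hβ1, hβ⟩ := ih
      have hzI : T^[j] x ∈ Set.Ico (0:ℝ) 1 := hmaps.iterate j hx
      obtain ⟨q, hzq, hq1, hq⟩ := right_piece hT hzI
      refine ⟨min β (x + (q - T^[j] x)), lt_min hxβ (by linarith), le_trans (min_le_left _ _) hβ1, ?_⟩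
      intro y hy
      have hyβ : y ∈ Set.Ico x β := ⟨hy.1, lt_of_lt_of_le hy.2 (min_le_left _ _)⟩
      have h1 := hβ y hyβ
      have hwm : T^[j] y ∈ Set.Ico (T^[j] x) q := by
        rw [h1]
        constructor
        · linarith [hy.1]
        · have := lt_of_lt_of_le hy.2 (min_le_right _ _); linarith
      have h2 := hq _ hwm
      rw [Function.iterate_succ_apply', Function.iterate_succ_apply', h2, h1]
      ring
  obtain ⟨β, hxβ, hβ1, hβ⟩ := loc n
  have hper : ∀ y ∈ Set.Ico x β, T^[n] y = y := by
    intro y hy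
    rw [hβ y hy, hfix]; ring
  have hqn : ∀ y ∈ Set.Ico x β, ∀ q : ℕ, T^[q * n] y = y := by
    intro y hy q
    induction q with
    | zero => simp
    | succ q ih =>
      have : (q + 1) * n = n + q * n := by ring
      rw [this, Function.iterate_add_apply, ih, hper y hy]
  -- finite set capturing all orbit points inside (x, β)
  set P : Fin M → Prop := fun j => ∃ i, 1 ≤ i ∧ T^[i] (d j) ∈ Set.Ioo x β with hP
  set idx : Fin M → ℕ := fun j => if h : P j then Nat.find h else 0 with hidx
  set S : Set ℝ := ⋃ (j : Fin M), ⋃ (r ∈ Finset.range n), {T^[r] (T^[idx j] (d j))} with hS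
  have hSfin : S.Finite := by
    apply Set.finite_iUnion
    intro j
    apply Set.Finite.biUnion (Finset.range n).finite_toSet
    intro r _
    exact Set.finite_singleton _
  have hES : ∀ e ∈ Set.Ioo x β, (∃ j i, 1 ≤ i ∧ T^[i] (d j) = e) → e ∈ S := by
    rintro e he ⟨j, i, hi1, hie⟩
    have hPj : P j := ⟨i, hi1, hie ▸ he⟩
    have hspec := Nat.find_spec hPj
    have hmin : Nat.find hPj ≤ i := Nat.find_min' hPj ⟨hi1, hie ▸ he⟩
    set i0 := Nat.find hPj with hi0
    have hidxj : idx j = i0 := by rw [hidx]; simp [hPj]; rfl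
    have hy0 : T^[i0] (d j) ∈ Set.Ioo x β := hspec.2
    have hy0' : T^[i0] (d j) ∈ Set.Ico x β := ⟨hy0.1.le, hy0.2⟩
    set r := (i - i0) % n with hr
    set q := (i - i0) / n with hq
    have hrn : r < n := Nat.mod_lt _ (by omega)
    have hisum : i = r + (q * n + i0) := by
      have h1 := Nat.div_add_mod (i - i0) n
      have h2 : q * n = n * ((i - i0) / n) := by rw [hq, Nat.mul_comm]
      omega
    have : T^[i] (d j) = T^[r] (T^[q * n] (T^[i0] (d j))) := by
      rw [hisum, Function.iterate_add_apply, Function.iterate_add_apply]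
    rw [hqn _ hy0' q] at this
    rw [hS]
    refine Set.mem_iUnion.mpr ⟨j, ?_⟩
    refine Set.mem_iUnion.mpr ⟨r, ?_⟩
    refine Set.mem_iUnion.mpr ⟨Finset.mem_range.mpr hrn, ?_⟩
    rw [hidxj, ← this, hie]
    rfl
  have hIooinf : (Set.Ioo x β).Infinite := Set.Ioo_infinite hxβ
  obtain ⟨t0, ht0⟩ := (hIooinf.diff hSfin).nonempty
  have ht0I : t0 ∈ Set.Ioo x β := ht0.1
  have ht0x : t0 ∈ Set.Ico (0:ℝ) 1 := ⟨le_trans hx.1 ht0I.1.le, lt_of_lt_of_le ht0I.2 hβ1⟩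
  have hcl := hdense ht0x
  have hO : IsOpen (Set.Ioo x β \ S) := isOpen_Ioo.sdiff hSfin.isClosed
  obtain ⟨e, heO, heE⟩ := mem_closure_iff.mp hcl _ hO ht0
  obtain ⟨j, hj⟩ := Set.mem_iUnion.mp heE
  obtain ⟨i, hi1, hie⟩ := hj
  exact heO.2 (hES e heO.1 ⟨j, i, hi1, hie⟩)


/-- A right-continuous IET `T` of `[0,1)` with at least one discontinuity,
whose discontinuities are `d 0 < ⋯ < d (N-2)`, is aperiodic (no periodic points
in `[0,1)`) if and only if the union of the forward orbits of its discontinuities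
is dense in `[0,1)`. -/
theorem aperiodic_iff_discontinuity_orbits_dense (N : ℕ) (hN : 2 ≤ N)
    (T : ℝ → ℝ) (hT : IsIET T)
    (d : Fin (N - 1) → ℝ) (hmono : StrictMono d)
    (hrange : Set.range d = Discont T 0 1) :
    (∀ x ∈ Set.Ico (0 : ℝ) 1, ∀ n : ℕ, 1 ≤ n → T^[n] x ≠ x) ↔
      Set.Ico (0 : ℝ) 1 ⊆ closure (⋃ j : Fin (N - 1), fwdOrbit T (d j)) := by
  constructor
  · intro hap
    set E := ⋃ j : Fin (N - 1), fwdOrbit T (d j) with hE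
    have hfin : (Discont T 0 1).Finite := by
      rw [← hrange]; exact Set.finite_range d
    have hTd : ∀ t ∈ Discont T 0 1, T t ∈ E := by
      intro t ht
      rw [← hrange] at ht
      obtain ⟨j, rfl⟩ := ht
      exact Set.mem_iUnion.mpr ⟨j, 1, le_rfl, by simp⟩
    have hTE : ∀ e ∈ E, T e ∈ E := by
      intro e he
      obtain ⟨j, m, hm, hme⟩ := Set.mem_iUnion.mp he
      exact Set.mem_iUnion.mpr ⟨j, m + 1, by omega,
        by rw [Function.iterate_succ_apply', hme]⟩
    have hT0ne : T 0 ≠ 0 := by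
      have := hap 0 ⟨le_rfl, one_pos⟩ 1 le_rfl
      simpa using this
    have hT0 : T 0 ∈ E := by
      obtain ⟨t, ht, hTt⟩ := exists_discont_map_zero hT hfin hT0ne
      have h1 : T 0 = T (T t) := by rw [hTt]
      rw [h1]
      exact hTE _ (hTd t ht)
    exact dense_of_aperiodic hT hfin hTd hT0 hTE hap
  · intro hdense
    exact aperiodic_of_dense hT d hdense
end
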